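/- arXiv:2209.09277 — 2 statements merged into one kernel-verified Lean document; each statement's English description precedes it below -/
import Mathlib

section
/- Every noncrossing involution w in S_n has steady-state time at most 1; that is, BB^1(w) is in steady state. -/
open scoped Classical

/-- A box-ball system configuration with `n` balls: each of `1,...,n` appears exactly once,
and every entry is either a ball (a value in `1..n`) or an empty box `e = n+1`. -/
def IsBBSConfig (n : ℕ) (X : ℤ → ℕ) : Prop :=
  (∀ k : ℕ, 1 ≤ k → k ≤ n → ∃! j : ℤ, X j = k) ∧
  ∀ j : ℤ, X j = n + 1 ∨ (1 ≤ X j ∧ X j ≤ n)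

/-- The position of ball `k` in the configuration `X`. -/
noncomputable def pos (X : ℤ → ℕ) (k : ℕ) : ℤ :=
  Classical.epsilon fun j => X j = k

/-- The nearest empty box strictly to the right of position `p`. -/
noncomputable def jumpTarget (n : ℕ) (X : ℤ → ℕ) (p : ℤ) : ℤ :=
  Classical.epsilon fun q => p < q ∧ X q = n + 1 ∧ ∀ r : ℤ, p < r → X r = n + 1 → q ≤ r

/-- Ball `k` jumps to the nearest empty box to its right. -/
noncomputable def moveBall (n k : ℕ) (X : ℤ → ℕ) : ℤ → ℕ := fun j =>
  if j = jumpTarget n X (pos X k) then k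
  else if j = pos X k then n + 1
  else X j

/-- One box-ball move: the balls `1,...,n` jump, in increasing order of label. -/
noncomputable def BBMove (n : ℕ) (X : ℤ → ℕ) : ℤ → ℕ :=
  (List.range n).foldl (fun Y k => moveBall n (k + 1) Y) X

/-- The result of applying `t` box-ball moves to `X`. -/
noncomputable def BB (n t : ℕ) (X : ℤ → ℕ) : ℤ → ℕ := (BBMove n)^[t] X

/-- The configuration of a permutation `w`: the one-line notation of `w` (with values `1..n`)
is placed in boxes `1,...,n`, and all other boxes are empty. -/
def configOfPerm (n : ℕ) (w : Equiv.Perm (Fin n)) : ℤ → ℕ := fun j =>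
  if h : 1 ≤ j ∧ j ≤ (n : ℤ) then ((w ⟨j.toNat - 1, by omega⟩ : Fin n) : ℕ) + 1
  else n + 1

/-- `[a,b]` is a maximal contiguous increasing nonempty run of balls in `X`. -/
def IsRun (n : ℕ) (X : ℤ → ℕ) (a b : ℤ) : Prop :=
  a ≤ b ∧ (∀ j : ℤ, a ≤ j → j ≤ b → 1 ≤ X j ∧ X j ≤ n) ∧
  (∀ j : ℤ, a ≤ j → j < b → X j < X (j + 1)) ∧
  X a < X (a - 1) ∧ (X (b + 1) = n + 1 ∨ X (b + 1) < X b)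

/-- The run `[a,b]` of `X` is a soliton: it is preserved (as a run, with the same ball values
in the same order) by all subsequent box-ball moves. -/
def IsSoliton (n : ℕ) (X : ℤ → ℕ) (a b : ℤ) : Prop :=
  IsRun n X a b ∧ ∀ t : ℕ, ∃ a' : ℤ,
    IsRun n (BB n t X) a' (a' + (b - a)) ∧
    ∀ i : ℤ, 0 ≤ i → i ≤ b - a → BB n t X (a' + i) = X (a + i)

/-- A configuration is in steady state when every ball is contained in a soliton. -/
def SteadyState (n : ℕ) (X : ℤ → ℕ) : Prop :=
  ∀ j : ℤ, 1 ≤ X j → X j ≤ n → ∃ a b : ℤ, a ≤ j ∧ j ≤ b ∧ IsSoliton n X a b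

/-- The steady-state time of a permutation: the minimal number of box-ball moves needed
for its configuration to reach steady state. -/
noncomputable def SST (n : ℕ) (w : Equiv.Perm (Fin n)) : ℕ :=
  sInf {t : ℕ | SteadyState n (BB n t (configOfPerm n w))}

/-- The list of positions of the balls of `X`, from left to right. -/
noncomputable def ballPosList (n : ℕ) (X : ℤ → ℕ) : List ℤ :=
  ((Finset.Icc 1 n).image (pos X)).sort (· ≤ ·)

/-- Split a (left-to-right) list of ball positions into maximal blocks of contiguous positions
carrying increasing values: the increasing runs, from leftmost to rightmost. -/
def splitRuns (X : ℤ → ℕ) : List ℤ → List (List ℤ)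
  | [] => []
  | [p] => [[p]]
  | p :: q :: ps =>
    match splitRuns X (q :: ps) with
    | [] => [[p]]
    | r :: rest =>
      if p + 1 = q ∧ X p < X q then (p :: r) :: rest else [p] :: r :: rest

/-- The increasing run decomposition of `X`: the list of its increasing runs (as lists of ball
values), the first row being the rightmost run, the second row the next run to the left, etc. -/
noncomputable def ID (n : ℕ) (X : ℤ → ℕ) : List (List ℕ) :=
  ((splitRuns X (ballPosList n X)).map fun r => r.map X).reverse

/-- The soliton decomposition of a permutation: the increasing run decomposition of its
configuration once it has reached steady state (first row = rightmost soliton). -/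
noncomputable def SD (n : ℕ) (w : Equiv.Perm (Fin n)) : List (List ℕ) :=
  ID n (BB n (SST n w) (configOfPerm n w))

/-- Schensted row insertion of `x` into a row: returns the new row and the bumped entry. -/
def rowInsert (x : ℕ) : List ℕ → List ℕ × Option ℕ
  | [] => ([x], none)
  | y :: ys =>
    if x < y then (x :: ys, some y)
    else
      let p := rowInsert x ys
      (y :: p.1, p.2)

/-- Robinson--Schensted insertion of `x` into a tableau (a list of rows). -/
def insertT : List (List ℕ) → ℕ → List (List ℕ)
  | [], x => [[x]]
  | r :: rest, x =>
    match rowInsert x r with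
    | (r', none) => r' :: rest
    | (r', some y) => r' :: insertT rest y

/-- The index of the first row where the second tableau is longer than the first:
the row where a new cell was added. -/
def growRow : List (List ℕ) → List (List ℕ) → ℕ
  | [], _ => 0
  | _ :: _, [] => 0
  | p :: ps, q :: qs => if p.length < q.length then 0 else growRow ps qs + 1

def addToRow : List (List ℕ) → ℕ → ℕ → List (List ℕ)
  | [], _, i => [[i]]
  | q :: qs, 0, i => (q ++ [i]) :: qs
  | q :: qs, r + 1, i => q :: addToRow qs r i

/-- The pair of Robinson--Schensted tableaux `(P, Q)` of a word. -/
def RSpair (l : List ℕ) : List (List ℕ) × List (List ℕ) :=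
  ((List.range l.length).zip l).foldl
    (fun PQ ix =>
      let P' := insertT PQ.1 ix.2
      (P', addToRow PQ.2 (growRow PQ.1 P') (ix.1 + 1)))
    ([], [])

/-- The Robinson--Schensted insertion tableau `P(w)` of a word. -/
def RSP (l : List ℕ) : List (List ℕ) := (RSpair l).1

/-- The Robinson--Schensted recording tableau `Q(w)` of a word. -/
def RSQ (l : List ℕ) : List (List ℕ) := (RSpair l).2

/-- The one-line notation of a permutation of `Fin n`, as a word with values in `1..n`. -/
def wordOf (n : ℕ) (w : Equiv.Perm (Fin n)) : List ℕ :=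
  List.ofFn fun i => (w i : ℕ) + 1

/-- `T` is a standard Young tableau of size `n` (as a list of rows): rows are nonempty and
weakly decreasing in length, rows and columns strictly increase, and the entries are
exactly `1,...,n`. -/
def IsStandardTableau (n : ℕ) (T : List (List ℕ)) : Prop :=
  (∀ r ∈ T, r ≠ []) ∧
  (∀ r ∈ T, r.Chain' (· < ·)) ∧
  T.Chain' (fun r r' => r'.length ≤ r.length ∧
    ∀ k : ℕ, k < r'.length → r.getD k 0 < r'.getD k 0) ∧
  List.Perm T.flatten (List.range' 1 n)

/-- The column reading word of a tableau: columns are read bottom to top, left to right. -/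
def columnWord (T : List (List ℕ)) : List ℕ :=
  (List.range (T.headD []).length).flatMap fun k => (T.filterMap fun r => r[k]?).reverse

/-- The concatenation of the columns of a tableau, each read top to bottom, left to right. -/
def colsTopDown (T : List (List ℕ)) : List ℕ :=
  (List.range (T.headD []).length).flatMap fun k => T.filterMap fun r => r[k]?

/-- `T` is the column superstandard tableau of its shape: the standard tableau obtained by
filling the columns top to bottom, from left to right, with `1,2,...,n` in order. -/
def IsColumnSuperstandard (n : ℕ) (T : List (List ℕ)) : Prop :=
  IsStandardTableau n T ∧ colsTopDown T = List.range' 1 n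

/-- The length of a longest increasing subsequence of a word. -/
def incrLen (l : List ℕ) : ℕ :=
  ((l.sublists.filter fun s => decide (s.IsChain (· < ·))).map List.length).foldr max 0

/-- The number of descents of a word. -/
def desNum (l : List ℕ) : ℕ :=
  ((l.zip l.tail).filter fun p => decide (p.2 < p.1)).length

/-- A noncrossing involution: no pair of its 2-cycles can be written as `(a c)`, `(b d)`
with `a < b < c < d`. -/
def Noncrossing {n : ℕ} (w : Equiv.Perm (Fin n)) : Prop :=
  ¬ ∃ a b c d : Fin n, a < b ∧ b < c ∧ c < d ∧ w a = c ∧ w b = d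

/-- A nested involution: every pair of its distinct 2-cycles is a nesting, i.e. can be
written as `(a d)`, `(b c)` with `a < b < c < d`. -/
def Nested {n : ℕ} (w : Equiv.Perm (Fin n)) : Prop :=
  ∀ a b c d : Fin n, a < c → b < d → w a = c → w b = d → a ≠ b →
    (a < b ∧ d < c) ∨ (b < a ∧ c < d)

/-- `X` and `Y` differ by a dual Knuth relation of the first kind: `X` has the ball values
`k+1, k, k+2` in this relative left-to-right order, and `Y` is obtained from `X` by swapping
the balls `k+1` and `k+2`. -/
def DK1 (n : ℕ) (X Y : ℤ → ℕ) : Prop :=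
  ∃ (k : ℕ) (p q r : ℤ), 1 ≤ k ∧ k + 2 ≤ n ∧ p < q ∧ q < r ∧
    X p = k + 1 ∧ X q = k ∧ X r = k + 2 ∧
    Y p = k + 2 ∧ Y r = k + 1 ∧ ∀ j : ℤ, j ≠ p → j ≠ r → Y j = X j

/-- `X` and `Y` differ by a dual Knuth relation of the second kind: `X` has the ball values
`k, k+2, k+1` in this relative left-to-right order, and `Y` is obtained from `X` by swapping
the balls `k` and `k+1`. -/
def DK2 (n : ℕ) (X Y : ℤ → ℕ) : Prop :=
  ∃ (k : ℕ) (p q r : ℤ), 1 ≤ k ∧ k + 2 ≤ n ∧ p < q ∧ q < r ∧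
    X p = k ∧ X q = k + 2 ∧ X r = k + 1 ∧
    Y p = k + 1 ∧ Y r = k ∧ ∀ j : ℤ, j ≠ p → j ≠ r → Y j = X j

/-- `X` and `Y` differ by a dual Knuth relation (of the first or second kind). -/
def DualKnuth (n : ℕ) (X Y : ℤ → ℕ) : Prop :=
  DK1 n X Y ∨ DK1 n Y X ∨ DK2 n X Y ∨ DK2 n Y X


/-!
Write `σ` for `w` acting on `[1, n]`, so that ball `k` starts in box `σ k`. In the first move a
ball `k` closing an arc (`σ k < k`) moves one box, and a ball `k` whose predecessor opens an arc
jumps into the box `σ (k - 1)` just vacated by ball `k - 1`; noncrossing guarantees that every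
box it passes is occupied at that moment. These singletons land in distinct boxes of `[2, n]`,
and two of them in adjacent boxes always form a descent. All other balls jump past box `n` and
line up there, in increasing order, as one block of length `L ≥ 1`. From then on each move
shifts every singleton by one box and the block by `L` boxes, so the shape is preserved and
every run is a soliton.
-/

lemma Set.InjOn.update_of_forall_ne {α β : Type*} [DecidableEq α] {f : α → β} {s : Set α}
    (hf : Set.InjOn f s) (a : α) {b : β} (hb : ∀ x ∈ s, f x ≠ b) :
    Set.InjOn (Function.update f a b) s := by
  intro x hx y hy hxy
  simp only [Function.update_apply] at hxy
  split_ifs at hxy with hxa hya hya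
  · rw [hxa, hya]
  · exact absurd hxy.symm (hb y hy)
  · exact absurd hxy (hb x hx)
  · exact hf hx hy hxy

noncomputable def placedConfig (n : ℕ) (f : ℕ → ℤ) (j : ℤ) : ℕ :=
  if h : ∃ v ∈ Set.Icc 1 n, f v = j then h.choose else n + 1

section Placement

variable {n : ℕ} {f : ℕ → ℤ}

lemma placedConfig_eq_of_apply_eq (hf : Set.InjOn f (Set.Icc 1 n)) {v : ℕ} {j : ℤ}
    (hv : v ∈ Set.Icc 1 n) (h : f v = j) : placedConfig n f j = v := by
  have hex : ∃ v ∈ Set.Icc 1 n, f v = j := ⟨v, hv, h⟩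
  rw [placedConfig, dif_pos hex]
  exact hf hex.choose_spec.1 hv (hex.choose_spec.2.trans h.symm)

lemma placedConfig_eq_empty {j : ℤ} (h : ∀ v ∈ Set.Icc 1 n, f v ≠ j) :
    placedConfig n f j = n + 1 := by
  rw [placedConfig, dif_neg]
  rintro ⟨v, hv, hvj⟩
  exact h v hv hvj

lemma placedConfig_eq_empty_or (n : ℕ) (f : ℕ → ℤ) (j : ℤ) :
    placedConfig n f j = n + 1 ∨ ∃ u ∈ Set.Icc 1 n, f u = j := by
  rw [placedConfig]
  split_ifs with h
  · exact Or.inr h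
  · exact Or.inl rfl

lemma placedConfig_congr {g : ℕ → ℤ} (hfg : Set.EqOn f g (Set.Icc 1 n)) :
    placedConfig n f = placedConfig n g := by
  funext j
  have : ∀ v, (v ∈ Set.Icc 1 n ∧ f v = j) = (v ∈ Set.Icc 1 n ∧ g v = j) := fun v =>
    propext ⟨fun ⟨hv, h⟩ => ⟨hv, hfg hv ▸ h⟩, fun ⟨hv, h⟩ => ⟨hv, hfg hv ▸ h⟩⟩
  simp only [placedConfig, this]

lemma pos_placedConfig (hf : Set.InjOn f (Set.Icc 1 n)) {v : ℕ} (hv : v ∈ Set.Icc 1 n) :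
    pos (placedConfig n f) v = f v := by
  have hspec : placedConfig n f (pos (placedConfig n f) v) = v :=
    Classical.epsilon_spec (p := fun j => placedConfig n f j = v)
      ⟨f v, placedConfig_eq_of_apply_eq hf hv rfl⟩
  rcases placedConfig_eq_empty_or n f (pos (placedConfig n f) v) with h | ⟨u, hu, hfu⟩
  · exact absurd (hspec.symm.trans h) (Nat.lt_succ_of_le hv.2).ne
  · rw [placedConfig_eq_of_apply_eq hf hu hfu] at hspec
    rw [← hfu, hspec]

lemma jumpTarget_eq {X : ℤ → ℕ} {p q : ℤ} (hpq : p < q) (hq : X q = n + 1)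
    (hfull : ∀ r, p < r → r < q → X r ≠ n + 1) : jumpTarget n X p = q := by
  have hex : ∃ q, p < q ∧ X q = n + 1 ∧ ∀ r : ℤ, p < r → X r = n + 1 → q ≤ r :=
    ⟨q, hpq, hq, fun r hpr hr => not_lt.mp fun hrq => hfull r hpr hrq hr⟩
  obtain ⟨hpq', hq', hmin⟩ := Classical.epsilon_spec hex
  exact le_antisymm (hmin q hpq hq) (not_lt.mp fun h => hfull _ hpq' h hq')

lemma moveBall_placedConfig (hf : Set.InjOn f (Set.Icc 1 n)) {k : ℕ} (hk : k ∈ Set.Icc 1 n)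
    {q : ℤ} (hkq : f k < q) (hq : ∀ v ∈ Set.Icc 1 n, f v ≠ q)
    (hfull : ∀ j, f k < j → j < q → ∃ v ∈ Set.Icc 1 n, f v = j) :
    moveBall n k (placedConfig n f) = placedConfig n (Function.update f k q) := by
  have hf' := hf.update_of_forall_ne k hq
  have hjump : jumpTarget n (placedConfig n f) (f k) = q := by
    refine jumpTarget_eq hkq (placedConfig_eq_empty hq) fun j hkj hjq => ?_
    obtain ⟨v, hv, rfl⟩ := hfull j hkj hjq
    rw [placedConfig_eq_of_apply_eq hf hv rfl]
    exact (Nat.lt_succ_of_le hv.2).ne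
  have hvacant : ∀ j, j ≠ q → placedConfig n f j = n + 1 →
      placedConfig n (Function.update f k q) j = n + 1 := by
    intro j hjq hj
    refine placedConfig_eq_empty fun v hv hvj => ?_
    rw [Function.update_apply] at hvj
    split_ifs at hvj
    · exact hjq hvj.symm
    · rw [placedConfig_eq_of_apply_eq hf hv hvj] at hj
      exact (Nat.lt_succ_of_le hv.2).ne hj
  funext j
  rw [moveBall, pos_placedConfig hf hk, hjump]
  split_ifs with hjq hjk
  · exact (placedConfig_eq_of_apply_eq hf' hk (by simp [hjq])).symm
  · refine (placedConfig_eq_empty fun v hv hvj => ?_).symm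
    rw [Function.update_apply] at hvj
    split_ifs at hvj with hvk
    · exact hjq hvj.symm
    · exact hvk (hf hv hk (hvj.trans hjk))
  · rcases placedConfig_eq_empty_or n f j with h | ⟨u, hu, hfu⟩
    · rw [h, hvacant j hjq h]
    · have huk : u ≠ k := by
        rintro rfl
        exact hjk hfu.symm
      rw [placedConfig_eq_of_apply_eq hf hu hfu,
        placedConfig_eq_of_apply_eq hf' hu (by rw [Function.update_of_ne huk, hfu])]

lemma injOn_ite_le {ρ τ : ℕ → ℤ} (hρ : Set.InjOn ρ (Set.Icc 1 n))
    (hτ : Set.InjOn τ (Set.Icc 1 n)) (hne : ∀ k ∈ Set.Icc 1 n, ∀ v ∈ Set.Icc 1 n, k < v → τ k ≠ ρ v)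
    (k : ℕ) : Set.InjOn (fun v => if v ≤ k then τ v else ρ v) (Set.Icc 1 n) := by
  intro u hu v hv huv
  simp only at huv
  split_ifs at huv with hu' hv' hv'
  · exact hτ hu hv huv
  · exact absurd huv (hne u hu v hv (by omega))
  · exact absurd huv.symm (hne v hv u hu (by omega))
  · exact hρ hu hv huv

lemma moveBall_succ_placedConfig_ite {ρ τ : ℕ → ℤ} (hρ : Set.InjOn ρ (Set.Icc 1 n))
    (hτ : Set.InjOn τ (Set.Icc 1 n)) (hlt : ∀ k ∈ Set.Icc 1 n, ρ k < τ k)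
    (hne : ∀ k ∈ Set.Icc 1 n, ∀ v ∈ Set.Icc 1 n, k < v → τ k ≠ ρ v)
    (hfull : ∀ k ∈ Set.Icc 1 n, ∀ j, ρ k < j → j < τ k →
      ∃ v ∈ Set.Icc 1 n, (k ≤ v ∧ ρ v = j) ∨ (v < k ∧ τ v = j))
    {k : ℕ} (hk : k + 1 ≤ n) :
    moveBall n (k + 1) (placedConfig n fun v => if v ≤ k then τ v else ρ v) =
      placedConfig n fun v => if v ≤ k + 1 then τ v else ρ v := by
  have hk1 : k + 1 ∈ Set.Icc 1 n := ⟨by omega, hk⟩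
  have hupd : Function.update (fun v => if v ≤ k then τ v else ρ v) (k + 1) (τ (k + 1)) =
      fun v => if v ≤ k + 1 then τ v else ρ v := by
    funext v
    simp only [Function.update_apply]
    split_ifs <;> first | rfl | subst_vars; rfl | omega
  rw [← hupd]
  refine moveBall_placedConfig (injOn_ite_le hρ hτ hne k) hk1 ?_ (fun v hv hvk => ?_)
    fun j h1 h2 => ?_
  · rw [if_neg (by omega)]
    exact hlt _ hk1
  · split_ifs at hvk
    · exact absurd (hτ hv hk1 hvk) (by omega)
    · obtain rfl | hkv := eq_or_lt_of_le (show k + 1 ≤ v by omega)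
      · exact (hlt _ hk1).ne hvk
      · exact hne _ hk1 v hv hkv hvk.symm
  · rw [if_neg (by omega)] at h1
    obtain ⟨v, hv, ⟨hkv, hvj⟩ | ⟨hvk, hvj⟩⟩ := hfull _ hk1 j h1 h2
    · exact ⟨v, hv, (if_neg (by omega)).trans hvj⟩
    · exact ⟨v, hv, (if_pos (by omega)).trans hvj⟩

/-- One box-ball move, given the box `ρ k` of every ball `k` before the move and the box `τ k`
where it lands. -/
theorem BBMove_placedConfig {ρ τ : ℕ → ℤ} (hρ : Set.InjOn ρ (Set.Icc 1 n))
    (hτ : Set.InjOn τ (Set.Icc 1 n)) (hlt : ∀ k ∈ Set.Icc 1 n, ρ k < τ k)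
    (hne : ∀ k ∈ Set.Icc 1 n, ∀ v ∈ Set.Icc 1 n, k < v → τ k ≠ ρ v)
    (hfull : ∀ k ∈ Set.Icc 1 n, ∀ j, ρ k < j → j < τ k →
      ∃ v ∈ Set.Icc 1 n, (k ≤ v ∧ ρ v = j) ∨ (v < k ∧ τ v = j)) :
    BBMove n (placedConfig n ρ) = placedConfig n τ := by
  have hfold : ∀ k ≤ n, (List.range k).foldl (fun Y k => moveBall n (k + 1) Y)
      (placedConfig n ρ) = placedConfig n fun v => if v ≤ k then τ v else ρ v := by
    intro k hk
    induction k with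
    | zero => exact placedConfig_congr fun v hv => (if_neg (by have := hv.1; omega)).symm
    | succ k ih =>
      rw [List.range_succ, List.foldl_append, ih (by omega), List.foldl_cons, List.foldl_nil,
        moveBall_succ_placedConfig_ite hρ hτ hlt hne hfull hk]
  rw [BBMove, hfold n le_rfl]
  exact placedConfig_congr fun v hv => if_pos hv.2

end Placement

lemma isSoliton_of_isRun_translate {n : ℕ} {X : ℤ → ℕ} {a b : ℤ} (s : ℕ → ℤ) (hs : s 0 = 0)
    (hrun : ∀ t, IsRun n (BB n t X) (a + s t) (b + s t))
    (hval : ∀ t i, 0 ≤ i → i ≤ b - a → BB n t X (a + s t + i) = X (a + i)) :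
    IsSoliton n X a b := by
  refine ⟨by simpa [hs, BB] using hrun 0, fun t => ⟨a + s t, ?_, hval t⟩⟩
  rw [show a + s t + (b - a) = b + s t by ring]
  exact hrun t

lemma Nat.exists_lt_count_eq {p : ℕ → Prop} [DecidablePred p] {r m : ℕ}
    (h : r < Nat.count p m) : ∃ i < m, p i ∧ Nat.count p i = r := by
  induction m with
  | zero => simp at h
  | succ m ih =>
    by_cases hr : r < Nat.count p m
    · obtain ⟨i, hi, hpi, hci⟩ := ih hr
      exact ⟨i, by omega, hpi, hci⟩
    · have hpm : p m := Nat.count_lt_count_succ_iff.mp (by omega)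
      rw [Nat.count_succ, if_pos hpm] at h
      exact ⟨m, by omega, hpm, by omega⟩

structure IsNoncrossingInvolution (n : ℕ) (σ : ℕ → ℕ) : Prop where
  mem : ∀ k, 1 ≤ k → k ≤ n → 1 ≤ σ k ∧ σ k ≤ n
  apply_apply : ∀ k, 1 ≤ k → k ≤ n → σ (σ k) = k
  not_crossing : ∀ a b, 1 ≤ a → a < b → b < σ a → σ a < σ b → σ b ≤ n → False

namespace IsNoncrossingInvolution

variable {n : ℕ} {σ : ℕ → ℕ}

lemma injOn (hσ : IsNoncrossingInvolution n σ) {a b : ℕ} (ha : 1 ≤ a) (han : a ≤ n)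
    (hb : 1 ≤ b) (hbn : b ≤ n) (h : σ a = σ b) : a = b := by
  rw [← hσ.apply_apply a ha han, h, hσ.apply_apply b hb hbn]

lemma lt_apply_of_lt_of_lt (hσ : IsNoncrossingInvolution n σ) {a j : ℕ} (ha : 1 ≤ a)
    (haj : a < j) (hj : j < σ a) (hσa : σ a ≤ n) : a < σ j := by
  have hjσ := hσ.apply_apply j (by omega) (by omega)
  have hσj := hσ.mem j (by omega) (by omega)
  rcases lt_trichotomy (σ j) a with hlt | heq | hgt
  · exact (hσ.not_crossing (σ j) a hσj.1 hlt (by omega) (by omega) hσa).elim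
  · rw [heq] at hjσ
    omega
  · exact hgt

lemma lt_of_apply_eq_apply_add_one (hσ : IsNoncrossingInvolution n σ) {k v : ℕ} (hk : 1 ≤ k)
    (hkn : k ≤ n) (hv : 1 ≤ v) (hvn : v ≤ n) (hclose : σ k < k) (h : σ v = σ k + 1) :
    v < k := by
  have hσk := hσ.mem k hk hkn
  have hkσ := hσ.apply_apply k hk hkn
  have hvσ : σ (σ k + 1) = v := h ▸ hσ.apply_apply v hv hvn
  rcases lt_trichotomy v k with hlt | rfl | hgt
  · exact hlt
  · omega
  · obtain hadj | hlt := eq_or_lt_of_le (show σ k + 1 ≤ k by omega)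
    · rw [hadj] at hvσ
      omega
    · exact (hσ.not_crossing (σ k) (σ k + 1) hσk.1 (by omega) (by omega) (by omega)
        (by omega)).elim

lemma apply_lt_apply_pred (hσ : IsNoncrossingInvolution n σ) {k : ℕ} (hk : 2 ≤ k) (hkn : k ≤ n)
    (hopen : k - 1 < σ (k - 1)) (hclose : k ≤ σ k) : σ k < σ (k - 1) := by
  have hσk := hσ.mem k (by omega) hkn
  have hkσ := hσ.apply_apply k (by omega) hkn
  have hpσ := hσ.apply_apply (k - 1) (by omega) (by omega)
  have hσp := hσ.mem (k - 1) (by omega) (by omega)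
  have hkb : k < σ (k - 1) := by
    obtain heq | hlt := eq_or_lt_of_le (show k ≤ σ (k - 1) by omega)
    · rw [← heq] at hpσ
      omega
    · exact hlt
  rcases lt_trichotomy (σ k) (σ (k - 1)) with hlt | heq | hgt
  · exact hlt
  · exact absurd (hσ.injOn (by omega) hkn (by omega) (by omega) heq) (by omega)
  · exact (hσ.not_crossing (k - 1) k (by omega) (by omega) hkb hgt hσk.2).elim

lemma eq_of_apply_pred_eq_apply_add_one (hσ : IsNoncrossingInvolution n σ) {k k' : ℕ}
    (hk : 1 ≤ k) (hkn : k ≤ n) (hk' : 2 ≤ k') (hclose : σ k < k)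
    (hopen' : k' - 1 < σ (k' - 1)) (h : σ (k' - 1) = σ k + 1) : k' = k := by
  have hσk := hσ.mem k hk hkn
  have hkσ := hσ.apply_apply k hk hkn
  have hσ' := hσ.apply_apply (k' - 1) (by omega) (by omega)
  rw [h] at hσ'
  rcases lt_trichotomy (k' - 1) (σ k) with hlt | heq | hgt
  · obtain hadj | hlt' := eq_or_lt_of_le (show σ k + 1 ≤ k by omega)
    · rw [hadj] at hσ'
      omega
    · exact (hσ.not_crossing (k' - 1) (σ k) (by omega) hlt (by omega) (by omega)
        (by omega)).elim
  · rw [heq, hkσ] at h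
    omega
  · omega

lemma lt_of_apply_pred_eq_apply_add_two (hσ : IsNoncrossingInvolution n σ) {k k' : ℕ}
    (hk : 1 ≤ k) (hkn : k ≤ n) (hk' : 2 ≤ k') (hclose : σ k < k)
    (hopen' : k' - 1 < σ (k' - 1)) (h : σ (k' - 1) = σ k + 2) : k' < k := by
  have hkσ := hσ.apply_apply k hk hkn
  have hσ' := hσ.apply_apply (k' - 1) (by omega) (by omega)
  rw [h] at hσ'
  rcases lt_trichotomy (k' - 1) (σ k) with hlt | heq | hgt
  · omega
  · rw [heq, hkσ] at h
    omega
  · by_contra hle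
    obtain hadj | hk2 : k = σ k + 1 ∨ k = σ k + 2 := by omega
    · rw [show k' - 1 = k by omega] at h
      omega
    · rw [← hk2] at hσ'
      omega

lemma lt_of_apply_pred_eq_apply_pred_add_one (hσ : IsNoncrossingInvolution n σ) {k k' : ℕ}
    (hk : 2 ≤ k) (hk' : 2 ≤ k') (hkn' : k' ≤ n) (hopen : k - 1 < σ (k - 1))
    (hopen' : k' - 1 < σ (k' - 1)) (h : σ (k' - 1) = σ (k - 1) + 1) : k' < k := by
  have hσ' := hσ.apply_apply (k' - 1) (by omega) (by omega)
  have hσ'n := hσ.mem (k' - 1) (by omega) (by omega)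
  have hpσ := hσ.apply_apply (k - 1) (by omega) (by omega)
  by_contra hle
  rcases lt_trichotomy (k' - 1) (σ (k - 1)) with hlt | heq | hgt
  · obtain heq' | hlt' := eq_or_lt_of_le (show k - 1 ≤ k' - 1 by omega)
    · rw [heq'] at h
      omega
    · exact hσ.not_crossing (k - 1) (k' - 1) (by omega) hlt' hlt (by omega) (by omega)
  · rw [heq, hpσ] at h
    omega
  · omega

end IsNoncrossingInvolution

/-- In the configuration of an involution `σ`, ball `k` sits in box `σ k`. It is a singleton
if it closes an arc, or if ball `k - 1` opens one; it then lands in box `singletonPos σ k`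
during the first move. -/
def IsSingleton (σ : ℕ → ℕ) (k : ℕ) : Prop := σ k < k ∨ (2 ≤ k ∧ k - 1 < σ (k - 1))

def singletonPos (σ : ℕ → ℕ) (k : ℕ) : ℕ := if σ k < k then σ k + 1 else σ (k - 1)

lemma singletonPos_of_lt {σ : ℕ → ℕ} {k : ℕ} (h : σ k < k) : singletonPos σ k = σ k + 1 :=
  if_pos h

lemma singletonPos_of_le {σ : ℕ → ℕ} {k : ℕ} (h : k ≤ σ k) : singletonPos σ k = σ (k - 1) :=
  if_neg (by omega)

lemma isSingleton_succ {σ : ℕ → ℕ} {a : ℕ} (ha : 1 ≤ a) (h : a < σ a) :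
    IsSingleton σ (a + 1) :=
  Or.inr ⟨by omega, by simpa using h⟩

/-- The number of balls among `1, …, k` that are not singletons. -/
noncomputable def bigRank (σ : ℕ → ℕ) (k : ℕ) : ℕ :=
  Nat.count (fun i => ¬ IsSingleton σ (i + 1)) k

section bigRank

variable {σ : ℕ → ℕ}

lemma bigRank_mono {k m : ℕ} (h : k ≤ m) : bigRank σ k ≤ bigRank σ m :=
  Nat.count_monotone _ h

lemma bigRank_lt_bigRank {k m : ℕ} (hm : 1 ≤ m) (hbig : ¬ IsSingleton σ m) (h : k < m) :
    bigRank σ k < bigRank σ m := by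
  obtain ⟨i, rfl⟩ : ∃ i, m = i + 1 := ⟨m - 1, by omega⟩
  exact (bigRank_mono (by omega)).trans_lt (Nat.count_lt_count_succ_iff.mpr hbig)

lemma one_le_bigRank {m : ℕ} (hm : 1 ≤ m) (hbig : ¬ IsSingleton σ m) : 1 ≤ bigRank σ m :=
  bigRank_lt_bigRank (k := 0) hm hbig hm

lemma eq_of_bigRank_eq {v v' : ℕ} (hv : 1 ≤ v) (hv' : 1 ≤ v') (hbig : ¬ IsSingleton σ v)
    (hbig' : ¬ IsSingleton σ v') (h : bigRank σ v = bigRank σ v') : v = v' := by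
  rcases lt_trichotomy v v' with hlt | heq | hgt
  · exact absurd h (bigRank_lt_bigRank hv' hbig' hlt).ne
  · exact heq
  · exact absurd h (bigRank_lt_bigRank hv hbig hgt).ne'

lemma exists_bigRank_eq {r m : ℕ} (hr : 1 ≤ r) (hrm : r ≤ bigRank σ m) :
    ∃ v, 1 ≤ v ∧ v ≤ m ∧ ¬ IsSingleton σ v ∧ bigRank σ v = r := by
  obtain ⟨i, him, hi, hci⟩ := Nat.exists_lt_count_eq (show r - 1 < bigRank σ m by omega)
  refine ⟨i + 1, by omega, by omega, hi, ?_⟩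
  rw [bigRank, Nat.count_succ, if_pos hi, hci]
  omega

end bigRank

/-- The box of ball `k` after `t + 1` moves from the configuration of `σ`: each singleton
moves one box per move, and the other balls form an increasing block of length
`bigRank σ n` right of box `n`, which moves by its length. -/
noncomputable def steadyPos (n : ℕ) (σ : ℕ → ℕ) (t k : ℕ) : ℤ :=
  if IsSingleton σ k then singletonPos σ k + t else n + bigRank σ k + t * bigRank σ n

lemma steadyPos_of_isSingleton {n t k : ℕ} {σ : ℕ → ℕ} (hs : IsSingleton σ k) :
    steadyPos n σ t k = singletonPos σ k + t :=
  if_pos hs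

lemma steadyPos_of_not_isSingleton {n t k : ℕ} {σ : ℕ → ℕ} (hb : ¬ IsSingleton σ k) :
    steadyPos n σ t k = n + bigRank σ k + t * bigRank σ n :=
  if_neg hb

lemma steadyPos_succ_of_isSingleton {n t k : ℕ} {σ : ℕ → ℕ} (hs : IsSingleton σ k) :
    steadyPos n σ (t + 1) k = steadyPos n σ t k + 1 := by
  rw [steadyPos_of_isSingleton hs, steadyPos_of_isSingleton hs]
  push_cast
  ring

lemma steadyPos_succ_of_not_isSingleton {n t k : ℕ} {σ : ℕ → ℕ} (hb : ¬ IsSingleton σ k) :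
    steadyPos n σ (t + 1) k = steadyPos n σ t k + bigRank σ n := by
  rw [steadyPos_of_not_isSingleton hb, steadyPos_of_not_isSingleton hb]
  push_cast
  ring

lemma steadyPos_lt_steadyPos_succ {n : ℕ} {σ : ℕ → ℕ} (t : ℕ) {k : ℕ}
    (hk : 1 ≤ k) (hkn : k ≤ n) : steadyPos n σ t k < steadyPos n σ (t + 1) k := by
  by_cases hs : IsSingleton σ k
  · rw [steadyPos_succ_of_isSingleton hs]
    omega
  · have := one_le_bigRank hk hs
    have := bigRank_mono (σ := σ) hkn
    rw [steadyPos_succ_of_not_isSingleton hs]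
    omega

/-- Within one move, the block shifts by its length: ball `k` jumps over the block balls of
larger rank, not yet moved, and then over those of smaller rank, already moved. -/
lemma exists_of_lt_steadyPos_succ {n : ℕ} {σ : ℕ → ℕ} (t : ℕ) {k : ℕ}
    (hkn : k ≤ n) {j : ℤ} (h1 : steadyPos n σ t k < j) (h2 : j < steadyPos n σ (t + 1) k) :
    ∃ v ∈ Set.Icc 1 n,
      (k ≤ v ∧ steadyPos n σ t v = j) ∨ (v < k ∧ steadyPos n σ (t + 1) v = j) := by
  by_cases hs : IsSingleton σ k
  · rw [steadyPos_succ_of_isSingleton hs] at h2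
    omega
  rw [steadyPos_succ_of_not_isSingleton hs] at h2
  rw [steadyPos_of_not_isSingleton hs] at h1 h2
  have hkL := bigRank_mono (σ := σ) hkn
  rcases le_or_gt j (n + bigRank σ n + t * bigRank σ n) with hj | hj
  · obtain ⟨v, hv, hvn, hvb, hvr⟩ := exists_bigRank_eq (σ := σ) (m := n)
      (r := (j - n - t * bigRank σ n).toNat) (by omega) (by omega)
    refine ⟨v, ⟨hv, hvn⟩, Or.inl ⟨not_lt.mp fun hvk => ?_, ?_⟩⟩
    · have := bigRank_mono (σ := σ) hvk.le
      omega
    · rw [steadyPos_of_not_isSingleton hvb]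
      omega
  · obtain ⟨v, hv, hvk, hvb, hvr⟩ := exists_bigRank_eq (σ := σ) (m := k)
      (r := (j - n - t * bigRank σ n - bigRank σ n).toNat) (by omega) (by omega)
    refine ⟨v, ⟨hv, by omega⟩, Or.inr ⟨lt_of_le_of_ne hvk (by rintro rfl; omega), ?_⟩⟩
    rw [steadyPos_succ_of_not_isSingleton hvb, steadyPos_of_not_isSingleton hvb]
    omega

namespace IsNoncrossingInvolution

variable {n : ℕ} {σ : ℕ → ℕ}

lemma two_le_of_isSingleton (hσ : IsNoncrossingInvolution n σ) {k : ℕ} (hk : 1 ≤ k)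
    (hkn : k ≤ n) (hs : IsSingleton σ k) : 2 ≤ k := by
  have := hσ.mem k hk hkn
  rcases hs with hclose | ⟨hk2, -⟩ <;> omega

lemma singletonPos_mem (hσ : IsNoncrossingInvolution n σ) {k : ℕ} (hk : 1 ≤ k) (hkn : k ≤ n)
    (hs : IsSingleton σ k) : 2 ≤ singletonPos σ k ∧ singletonPos σ k ≤ n := by
  by_cases hclose : σ k < k
  · have := hσ.mem k hk hkn
    rw [singletonPos_of_lt hclose]
    omega
  · obtain ⟨hk2, hopen⟩ := hs.resolve_left hclose
    have := hσ.mem (k - 1) (by omega) (by omega)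
    rw [singletonPos_of_le (not_lt.mp hclose)]
    omega

lemma singletonPos_injOn (hσ : IsNoncrossingInvolution n σ) {k k' : ℕ} (hk : 1 ≤ k)
    (hkn : k ≤ n) (hk' : 1 ≤ k') (hkn' : k' ≤ n) (hs : IsSingleton σ k)
    (hs' : IsSingleton σ k') (h : singletonPos σ k = singletonPos σ k') : k = k' := by
  by_cases hclose : σ k < k <;> by_cases hclose' : σ k' < k'
  · rw [singletonPos_of_lt hclose, singletonPos_of_lt hclose'] at h
    exact hσ.injOn hk hkn hk' hkn' (by omega)
  · obtain ⟨hk2', hopen'⟩ := hs'.resolve_left hclose'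
    rw [singletonPos_of_lt hclose, singletonPos_of_le (not_lt.mp hclose')] at h
    exact (hσ.eq_of_apply_pred_eq_apply_add_one hk hkn hk2' hclose hopen' h.symm).symm
  · obtain ⟨hk2, hopen⟩ := hs.resolve_left hclose
    rw [singletonPos_of_le (not_lt.mp hclose), singletonPos_of_lt hclose'] at h
    exact hσ.eq_of_apply_pred_eq_apply_add_one hk' hkn' hk2 hclose' hopen h
  · obtain ⟨hk2, -⟩ := hs.resolve_left hclose
    obtain ⟨hk2', -⟩ := hs'.resolve_left hclose'
    rw [singletonPos_of_le (not_lt.mp hclose), singletonPos_of_le (not_lt.mp hclose')] at h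
    have := hσ.injOn (by omega) (by omega) (by omega) (by omega) h
    omega

lemma lt_of_singletonPos_eq_add_one (hσ : IsNoncrossingInvolution n σ) {k k' : ℕ} (hk : 1 ≤ k)
    (hkn : k ≤ n) (hk' : 1 ≤ k') (hkn' : k' ≤ n) (hs : IsSingleton σ k)
    (hs' : IsSingleton σ k') (h : singletonPos σ k' = singletonPos σ k + 1) : k' < k := by
  by_cases hclose : σ k < k <;> by_cases hclose' : σ k' < k'
  · rw [singletonPos_of_lt hclose, singletonPos_of_lt hclose'] at h
    exact hσ.lt_of_apply_eq_apply_add_one hk hkn hk' hkn' hclose (by omega)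
  · obtain ⟨hk2', hopen'⟩ := hs'.resolve_left hclose'
    rw [singletonPos_of_lt hclose, singletonPos_of_le (not_lt.mp hclose')] at h
    exact hσ.lt_of_apply_pred_eq_apply_add_two hk hkn hk2' hclose hopen' h
  · obtain ⟨hk2, -⟩ := hs.resolve_left hclose
    rw [singletonPos_of_le (not_lt.mp hclose), singletonPos_of_lt hclose'] at h
    have := hσ.injOn hk' hkn' (by omega) (by omega) (show σ k' = σ (k - 1) by omega)
    omega
  · obtain ⟨hk2, hopen⟩ := hs.resolve_left hclose
    obtain ⟨hk2', hopen'⟩ := hs'.resolve_left hclose'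
    rw [singletonPos_of_le (not_lt.mp hclose), singletonPos_of_le (not_lt.mp hclose')] at h
    exact hσ.lt_of_apply_pred_eq_apply_pred_add_one hk2 hk2' hkn' hopen hopen' h

lemma singletonPos_succ (hσ : IsNoncrossingInvolution n σ) {a : ℕ} (ha : 1 ≤ a)
    (h : a + 1 < σ a) (hσa : σ a ≤ n) : singletonPos σ (a + 1) = σ a := by
  have := hσ.lt_apply_of_lt_of_lt (j := a + 1) ha (by omega) h hσa
  rw [singletonPos_of_le (by omega), Nat.add_sub_cancel]

lemma not_isSingleton_one (hσ : IsNoncrossingInvolution n σ) (hn : 1 ≤ n) :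
    ¬ IsSingleton σ 1 := by
  have := hσ.mem 1 le_rfl hn
  rintro (h | ⟨h, -⟩) <;> omega

lemma bigRank_one (hσ : IsNoncrossingInvolution n σ) (hn : 1 ≤ n) : bigRank σ 1 = 1 := by
  rw [bigRank, Nat.count_one, if_pos (hσ.not_isSingleton_one hn)]

lemma eq_one_of_bigRank_eq_one (hσ : IsNoncrossingInvolution n σ) {v : ℕ} (hv : 1 ≤ v)
    (hvn : v ≤ n) (hb : ¬ IsSingleton σ v) (h : bigRank σ v = 1) : v = 1 :=
  eq_of_bigRank_eq hv le_rfl hb (hσ.not_isSingleton_one (by omega))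
    (h.trans (hσ.bigRank_one (by omega)).symm)

lemma one_le_bigRank_self (hσ : IsNoncrossingInvolution n σ) (hn : 1 ≤ n) : 1 ≤ bigRank σ n :=
  (hσ.bigRank_one hn).symm.le.trans (bigRank_mono hn)

lemma steadyPos_lt_of_isSingleton (hσ : IsNoncrossingInvolution n σ) (t : ℕ) {k v : ℕ}
    (hk : 1 ≤ k) (hkn : k ≤ n) (hs : IsSingleton σ k) (hv : 1 ≤ v) (hvn : v ≤ n)
    (hb : ¬ IsSingleton σ v) : steadyPos n σ t k < steadyPos n σ t v := by
  have := hσ.singletonPos_mem hk hkn hs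
  have := one_le_bigRank hv hb
  have : t ≤ t * bigRank σ n := Nat.le_mul_of_pos_right t (hσ.one_le_bigRank_self (by omega))
  rw [steadyPos_of_isSingleton hs, steadyPos_of_not_isSingleton hb]
  omega

lemma eq_one_of_steadyPos_add_one_eq (hσ : IsNoncrossingInvolution n σ) (t : ℕ) {k v : ℕ}
    (hk : 1 ≤ k) (hkn : k ≤ n) (hs : IsSingleton σ k) (hv : 1 ≤ v) (hvn : v ≤ n)
    (hb : ¬ IsSingleton σ v) (h : steadyPos n σ t k + 1 = steadyPos n σ t v) : v = 1 := by
  have := hσ.singletonPos_mem hk hkn hs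
  have := one_le_bigRank hv hb
  have : t ≤ t * bigRank σ n := Nat.le_mul_of_pos_right t (hσ.one_le_bigRank_self (by omega))
  rw [steadyPos_of_isSingleton hs, steadyPos_of_not_isSingleton hb] at h
  exact hσ.eq_one_of_bigRank_eq_one hv hvn hb (by omega)

lemma steadyPos_injOn (hσ : IsNoncrossingInvolution n σ) (t : ℕ) :
    Set.InjOn (steadyPos n σ t) (Set.Icc 1 n) := by
  intro k ⟨hk, hkn⟩ v ⟨hv, hvn⟩ h
  by_cases hs : IsSingleton σ k <;> by_cases hs' : IsSingleton σ v
  · rw [steadyPos_of_isSingleton hs, steadyPos_of_isSingleton hs'] at h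
    exact hσ.singletonPos_injOn hk hkn hv hvn hs hs' (by omega)
  · exact absurd h (hσ.steadyPos_lt_of_isSingleton t hk hkn hs hv hvn hs').ne
  · exact absurd h (hσ.steadyPos_lt_of_isSingleton t hv hvn hs' hk hkn hs).ne'
  · rw [steadyPos_of_not_isSingleton hs, steadyPos_of_not_isSingleton hs'] at h
    exact eq_of_bigRank_eq hk hv hs hs' (by omega)

lemma apply_lt_steadyPos_zero (hσ : IsNoncrossingInvolution n σ) {k : ℕ} (hk : 1 ≤ k)
    (hkn : k ≤ n) : (σ k : ℤ) < steadyPos n σ 0 k := by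
  by_cases hs : IsSingleton σ k
  · rw [steadyPos_of_isSingleton hs]
    by_cases hclose : σ k < k
    · rw [singletonPos_of_lt hclose]
      omega
    · obtain ⟨hk2, hopen⟩ := hs.resolve_left hclose
      have := hσ.apply_lt_apply_pred hk2 hkn hopen (not_lt.mp hclose)
      rw [singletonPos_of_le (not_lt.mp hclose)]
      omega
  · have := hσ.mem k hk hkn
    have := one_le_bigRank hk hs
    rw [steadyPos_of_not_isSingleton hs]
    omega

lemma steadyPos_zero_ne_apply (hσ : IsNoncrossingInvolution n σ) {k v : ℕ} (hk : 1 ≤ k)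
    (hkn : k ≤ n) (hvn : v ≤ n) (hkv : k < v) : steadyPos n σ 0 k ≠ σ v := by
  intro h
  by_cases hs : IsSingleton σ k
  · rw [steadyPos_of_isSingleton hs] at h
    by_cases hclose : σ k < k
    · rw [singletonPos_of_lt hclose] at h
      have := hσ.lt_of_apply_eq_apply_add_one hk hkn (by omega) hvn hclose (by omega)
      omega
    · obtain ⟨hk2, -⟩ := hs.resolve_left hclose
      rw [singletonPos_of_le (not_lt.mp hclose)] at h
      have := hσ.injOn (by omega) (by omega) (by omega) hvn (show σ (k - 1) = σ v by omega)
      omega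
  · have := hσ.mem v (by omega) hvn
    have := one_le_bigRank hk hs
    rw [steadyPos_of_not_isSingleton hs] at h
    omega

/-- A singleton `k` jumps over balls `σ j` with `j` inside the arc opened by `k - 1`, and these
are larger than `k`. -/
lemma exists_of_lt_steadyPos_zero_of_isSingleton (hσ : IsNoncrossingInvolution n σ) {k : ℕ}
    (hkn : k ≤ n) (hs : IsSingleton σ k) {j : ℤ} (h1 : (σ k : ℤ) < j)
    (h2 : j < steadyPos n σ 0 k) : ∃ v ∈ Set.Icc 1 n, k ≤ v ∧ (σ v : ℤ) = j := by
  rw [steadyPos_of_isSingleton hs] at h2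
  by_cases hclose : σ k < k
  · rw [singletonPos_of_lt hclose] at h2
    omega
  · obtain ⟨hk2, hopen⟩ := hs.resolve_left hclose
    have hσp := hσ.mem (k - 1) (by omega) (by omega)
    rw [singletonPos_of_le (not_lt.mp hclose)] at h2
    lift j to ℕ using (by omega)
    have := hσ.lt_apply_of_lt_of_lt (j := j) (by omega) (by omega) (by omega) hσp.2
    exact ⟨σ j, hσ.mem j (by omega) (by omega), by omega,
      by rw [hσ.apply_apply j (by omega) (by omega)]⟩

/-- A non-singleton `k` jumps over the rest of the original configuration and the part of the
block already built. In a box `j ≤ n` whose ball `σ j < k` has already moved, the singleton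
`σ j + 1` has landed. -/
lemma exists_of_lt_steadyPos_zero_of_not_isSingleton (hσ : IsNoncrossingInvolution n σ)
    {k : ℕ} (hk : 1 ≤ k) (hkn : k ≤ n) (hb : ¬ IsSingleton σ k) {j : ℤ} (h1 : (σ k : ℤ) < j)
    (h2 : j < steadyPos n σ 0 k) :
    ∃ v ∈ Set.Icc 1 n, (k ≤ v ∧ (σ v : ℤ) = j) ∨ (v < k ∧ steadyPos n σ 0 v = j) := by
  rw [steadyPos_of_not_isSingleton hb] at h2
  have hclose : k ≤ σ k := not_lt.mp fun h => hb (Or.inl h)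
  rcases le_or_gt j n with hjn | hjn
  · lift j to ℕ using (by omega)
    have hj := hσ.mem j (by omega) (by omega)
    have hjσ := hσ.apply_apply j (by omega) (by omega)
    by_cases hkj : k ≤ σ j
    · exact ⟨σ j, hj, Or.inl ⟨hkj, by rw [hjσ]⟩⟩
    have hopen : σ j + 1 < σ (σ j) := by omega
    have hsucc : σ j + 1 < k := by
      refine lt_of_le_of_ne (by omega) fun heq => hb ?_
      exact heq ▸ isSingleton_succ hj.1 (by omega)
    refine ⟨σ j + 1, ⟨by omega, by omega⟩, Or.inr ⟨hsucc, ?_⟩⟩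
    rw [steadyPos_of_isSingleton (isSingleton_succ hj.1 (by omega)),
      hσ.singletonPos_succ hj.1 hopen (by omega), hjσ]
    simp
  · obtain ⟨v, hv, hvk, hvb, hvr⟩ :=
      exists_bigRank_eq (σ := σ) (r := (j - n).toNat) (m := k) (by omega) (by omega)
    have hvk : v < k := lt_of_le_of_ne hvk (by rintro rfl; omega)
    refine ⟨v, ⟨hv, by omega⟩, Or.inr ⟨hvk, ?_⟩⟩
    rw [steadyPos_of_not_isSingleton hvb]
    omega

theorem BBMove_placedConfig_apply (hσ : IsNoncrossingInvolution n σ) :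
    BBMove n (placedConfig n fun k => (σ k : ℤ)) = placedConfig n (steadyPos n σ 0) := by
  refine BBMove_placedConfig
    (fun k hk v hv h => hσ.injOn hk.1 hk.2 hv.1 hv.2 (Nat.cast_inj.mp h))
    (hσ.steadyPos_injOn 0) (fun k hk => hσ.apply_lt_steadyPos_zero hk.1 hk.2)
    (fun k hk v hv hkv => hσ.steadyPos_zero_ne_apply hk.1 hk.2 hv.2 hkv)
    (fun k hk j h1 h2 => ?_)
  by_cases hs : IsSingleton σ k
  · obtain ⟨v, hv, hkv, hvj⟩ := hσ.exists_of_lt_steadyPos_zero_of_isSingleton hk.2 hs h1 h2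
    exact ⟨v, hv, Or.inl ⟨hkv, hvj⟩⟩
  · exact hσ.exists_of_lt_steadyPos_zero_of_not_isSingleton hk.1 hk.2 hs h1 h2

lemma steadyPos_succ_ne (hσ : IsNoncrossingInvolution n σ) (t : ℕ) {k v : ℕ} (hk : 1 ≤ k)
    (hkn : k ≤ n) (hvn : v ≤ n) (hkv : k < v) :
    steadyPos n σ (t + 1) k ≠ steadyPos n σ t v := by
  intro h
  by_cases hs : IsSingleton σ k <;> by_cases hs' : IsSingleton σ v
  · rw [steadyPos_succ_of_isSingleton hs, steadyPos_of_isSingleton hs,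
      steadyPos_of_isSingleton hs'] at h
    have := hσ.lt_of_singletonPos_eq_add_one hk hkn (by omega) hvn hs hs' (by omega)
    omega
  · rw [steadyPos_succ_of_isSingleton hs] at h
    have := hσ.eq_one_of_steadyPos_add_one_eq t hk hkn hs (by omega) hvn hs' h
    omega
  · have := hσ.steadyPos_lt_of_isSingleton t (by omega) hvn hs' hk hkn hs
    have := hσ.one_le_bigRank_self (by omega)
    rw [steadyPos_succ_of_not_isSingleton hs] at h
    omega
  · have := bigRank_mono (σ := σ) hvn
    have := one_le_bigRank hk hs
    rw [steadyPos_succ_of_not_isSingleton hs, steadyPos_of_not_isSingleton hs,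
      steadyPos_of_not_isSingleton hs'] at h
    omega

theorem BBMove_placedConfig_steadyPos (hσ : IsNoncrossingInvolution n σ) (t : ℕ) :
    BBMove n (placedConfig n (steadyPos n σ t)) = placedConfig n (steadyPos n σ (t + 1)) :=
  BBMove_placedConfig (hσ.steadyPos_injOn t) (hσ.steadyPos_injOn (t + 1))
    (fun _ hk => steadyPos_lt_steadyPos_succ t hk.1 hk.2)
    (fun _ hk _ hv hkv => hσ.steadyPos_succ_ne t hk.1 hk.2 hv.2 hkv)
    (fun _ hk _ h1 h2 => exists_of_lt_steadyPos_succ t hk.2 h1 h2)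

theorem BB_placedConfig_steadyPos (hσ : IsNoncrossingInvolution n σ) (t : ℕ) :
    BB n t (placedConfig n (steadyPos n σ 0)) = placedConfig n (steadyPos n σ t) := by
  induction t with
  | zero => rfl
  | succ t ih =>
    rw [BB, Function.iterate_succ_apply', ← BB, ih, hσ.BBMove_placedConfig_steadyPos]

lemma placedConfig_steadyPos_self (hσ : IsNoncrossingInvolution n σ) (t : ℕ) {k : ℕ}
    (hk : 1 ≤ k) (hkn : k ≤ n) : placedConfig n (steadyPos n σ t) (steadyPos n σ t k) = k :=
  placedConfig_eq_of_apply_eq (hσ.steadyPos_injOn t) ⟨hk, hkn⟩ rfl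

lemma isRun_singleton (hσ : IsNoncrossingInvolution n σ) (t : ℕ) {k : ℕ} (hk : 1 ≤ k)
    (hkn : k ≤ n) (hs : IsSingleton σ k) :
    IsRun n (placedConfig n (steadyPos n σ t)) (steadyPos n σ t k) (steadyPos n σ t k) := by
  have hk2 := hσ.two_le_of_isSingleton hk hkn hs
  have hval := hσ.placedConfig_steadyPos_self t hk hkn
  refine ⟨le_rfl, fun j h1 h2 => ?_, fun j h1 h2 => by omega, ?_, ?_⟩
  · rw [le_antisymm h2 h1, hval]
    omega
  · rw [hval]
    rcases placedConfig_eq_empty_or n (steadyPos n σ t) (steadyPos n σ t k - 1) with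
      h | ⟨u, ⟨hu, hun⟩, hpos⟩
    · omega
    rw [← hpos, hσ.placedConfig_steadyPos_self t hu hun]
    by_cases hs' : IsSingleton σ u
    · rw [steadyPos_of_isSingleton hs', steadyPos_of_isSingleton hs] at hpos
      exact hσ.lt_of_singletonPos_eq_add_one hu hun hk hkn hs' hs (by omega)
    · have := hσ.steadyPos_lt_of_isSingleton t hk hkn hs hu hun hs'
      omega
  · rcases placedConfig_eq_empty_or n (steadyPos n σ t) (steadyPos n σ t k + 1) with
      h | ⟨u, ⟨hu, hun⟩, hpos⟩
    · exact Or.inl h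
    right
    rw [hval, ← hpos, hσ.placedConfig_steadyPos_self t hu hun]
    by_cases hs' : IsSingleton σ u
    · rw [steadyPos_of_isSingleton hs', steadyPos_of_isSingleton hs] at hpos
      exact hσ.lt_of_singletonPos_eq_add_one hk hkn hu hun hs hs' (by omega)
    · have := hσ.eq_one_of_steadyPos_add_one_eq t hk hkn hs hu hun hs' hpos.symm
      omega

lemma exists_placedConfig_steadyPos_block (hσ : IsNoncrossingInvolution n σ) (t : ℕ) {j : ℤ}
    (h1 : n + 1 + t * bigRank σ n ≤ j) (h2 : j ≤ n + bigRank σ n + t * bigRank σ n) :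
    ∃ v, 1 ≤ v ∧ v ≤ n ∧ ¬ IsSingleton σ v ∧ n + bigRank σ v + t * bigRank σ n = j ∧
      placedConfig n (steadyPos n σ t) j = v := by
  obtain ⟨v, hv, hvn, hvb, hvr⟩ :=
    exists_bigRank_eq (σ := σ) (m := n) (r := (j - n - t * bigRank σ n).toNat) (by omega) (by omega)
  have hpos : n + bigRank σ v + t * bigRank σ n = j := by omega
  refine ⟨v, hv, hvn, hvb, hpos, placedConfig_eq_of_apply_eq (hσ.steadyPos_injOn t) ⟨hv, hvn⟩ ?_⟩
  rw [steadyPos_of_not_isSingleton hvb, hpos]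

lemma isRun_block (hσ : IsNoncrossingInvolution n σ) (hn : 1 ≤ n) (t : ℕ) :
    IsRun n (placedConfig n (steadyPos n σ t))
      (n + 1 + t * bigRank σ n) (n + bigRank σ n + t * bigRank σ n) := by
  have hL := hσ.one_le_bigRank_self hn
  refine ⟨by omega, fun j h1 h2 => ?_, fun j h1 h2 => ?_, ?_, ?_⟩
  · obtain ⟨v, hv, hvn, -, -, hj⟩ := hσ.exists_placedConfig_steadyPos_block t h1 h2
    omega
  · obtain ⟨v, -, -, -, hvr, hj⟩ := hσ.exists_placedConfig_steadyPos_block t h1 h2.le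
    obtain ⟨v', -, -, -, hvr', hj'⟩ :=
      hσ.exists_placedConfig_steadyPos_block t (j := j + 1) (by omega) (by omega)
    rw [hj, hj']
    by_contra hle
    have := bigRank_mono (σ := σ) (not_lt.mp hle)
    omega
  · obtain ⟨v, hv, hvn, hvb, hvr, hj⟩ :=
      hσ.exists_placedConfig_steadyPos_block t le_rfl (by omega)
    rw [hj, hσ.eq_one_of_bigRank_eq_one hv hvn hvb (by omega)]
    rcases placedConfig_eq_empty_or n (steadyPos n σ t) (n + 1 + t * bigRank σ n - 1) with
      h | ⟨u, ⟨hu, hun⟩, hpos⟩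
    · omega
    rw [← hpos, hσ.placedConfig_steadyPos_self t hu hun]
    by_cases hs : IsSingleton σ u
    · exact hσ.two_le_of_isSingleton hu hun hs
    · have := one_le_bigRank hu hs
      rw [steadyPos_of_not_isSingleton hs] at hpos
      omega
  · refine Or.inl (placedConfig_eq_empty fun u ⟨hu, hun⟩ hpos => ?_)
    by_cases hs : IsSingleton σ u
    · have := hσ.singletonPos_mem hu hun hs
      have : t ≤ t * bigRank σ n := Nat.le_mul_of_pos_right t hL
      rw [steadyPos_of_isSingleton hs] at hpos
      omega
    · have := bigRank_mono (σ := σ) hun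
      rw [steadyPos_of_not_isSingleton hs] at hpos
      omega

theorem steadyState_placedConfig_steadyPos (hσ : IsNoncrossingInvolution n σ) :
    SteadyState n (placedConfig n (steadyPos n σ 0)) := by
  intro j hj hjn
  obtain ⟨k, ⟨hk, hkn⟩, rfl⟩ := (placedConfig_eq_empty_or n (steadyPos n σ 0) j).resolve_left
    (by omega)
  by_cases hs : IsSingleton σ k
  · have hshift : ∀ t : ℕ, steadyPos n σ 0 k + t = steadyPos n σ t k := fun t => by
      rw [steadyPos_of_isSingleton hs, steadyPos_of_isSingleton hs]
      push_cast
      ring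
    refine ⟨_, _, le_rfl, le_rfl, isSoliton_of_isRun_translate (fun t => t) rfl
      (fun t => ?_) (fun t i h0 hi => ?_)⟩
    · rw [hσ.BB_placedConfig_steadyPos, hshift]
      exact hσ.isRun_singleton t hk hkn hs
    · rw [show i = 0 by omega, add_zero, add_zero, hσ.BB_placedConfig_steadyPos, hshift,
        hσ.placedConfig_steadyPos_self t hk hkn, hσ.placedConfig_steadyPos_self 0 hk hkn]
  · have := one_le_bigRank hk hs
    have := bigRank_mono (σ := σ) hkn
    refine ⟨n + 1, n + bigRank σ n, ?_, ?_, isSoliton_of_isRun_translate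
      (fun t => t * bigRank σ n) (by simp) (fun t => ?_) (fun t i h0 hi => ?_)⟩
    · rw [steadyPos_of_not_isSingleton hs]
      omega
    · rw [steadyPos_of_not_isSingleton hs]
      omega
    · rw [hσ.BB_placedConfig_steadyPos]
      exact hσ.isRun_block (by omega) t
    · obtain ⟨v, hv, -, hvb, hvr, hval⟩ :=
        hσ.exists_placedConfig_steadyPos_block t (j := n + 1 + t * bigRank σ n + i) (by omega)
          (by omega)
      obtain ⟨v', hv', -, hvb', hvr', hval'⟩ :=
        hσ.exists_placedConfig_steadyPos_block 0 (j := n + 1 + i) (by omega) (by omega)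
      rw [hσ.BB_placedConfig_steadyPos, hval, hval', eq_of_bigRank_eq hv hv' hvb hvb' (by omega)]

end IsNoncrossingInvolution

def oneBased {n : ℕ} (w : Equiv.Perm (Fin n)) (k : ℕ) : ℕ :=
  if h : 1 ≤ k ∧ k ≤ n then (w ⟨k - 1, by omega⟩ : ℕ) + 1 else 0

section oneBased

variable {n : ℕ} {w : Equiv.Perm (Fin n)}

lemma oneBased_succ (i : Fin n) : oneBased w (i + 1) = w i + 1 := by
  rw [oneBased, dif_pos ⟨by omega, i.isLt⟩]
  rfl

lemma exists_fin_eq_val_add_one {k : ℕ} (hk : 1 ≤ k) (hkn : k ≤ n) : ∃ i : Fin n, k = i + 1 :=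
  ⟨⟨k - 1, by omega⟩, by simp only; omega⟩

lemma isNoncrossingInvolution_oneBased (hinv : w * w = 1) (hnc : Noncrossing w) :
    IsNoncrossingInvolution n (oneBased w) := by
  have hww : ∀ i, w (w i) = i := fun i => by rw [← Equiv.Perm.mul_apply, hinv, Equiv.Perm.one_apply]
  refine ⟨fun k hk hkn => ?_, fun k hk hkn => ?_, fun a b ha hab hba hlt hbn => hnc ?_⟩
  · obtain ⟨i, rfl⟩ := exists_fin_eq_val_add_one hk hkn
    rw [oneBased_succ]
    omega
  · obtain ⟨i, rfl⟩ := exists_fin_eq_val_add_one hk hkn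
    rw [oneBased_succ, oneBased_succ, hww]
  · obtain ⟨i, rfl⟩ := exists_fin_eq_val_add_one (n := n) ha (by omega)
    obtain ⟨i', rfl⟩ := exists_fin_eq_val_add_one (n := n) (k := b) (by omega) (by omega)
    rw [oneBased_succ] at hba hlt
    rw [oneBased_succ] at hlt hbn
    exact ⟨i, i', w i, w i', by omega, by omega, by omega, rfl, rfl⟩

lemma configOfPerm_eq_placedConfig (hσ : IsNoncrossingInvolution n (oneBased w)) :
    configOfPerm n w = placedConfig n fun k => (oneBased w k : ℤ) := by
  funext j
  by_cases hj : 1 ≤ j ∧ j ≤ (n : ℤ)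
  · have hmem := hσ.mem j.toNat (by omega) (by omega)
    rw [placedConfig_eq_of_apply_eq (v := oneBased w j.toNat)
      (fun k hk v hv h => hσ.injOn hk.1 hk.2 hv.1 hv.2 (Nat.cast_inj.mp h)) hmem
      (by rw [hσ.apply_apply j.toNat (by omega) (by omega)]; omega),
      configOfPerm, dif_pos hj, oneBased, dif_pos ⟨by omega, by omega⟩]
  · rw [configOfPerm, dif_neg hj]
    refine (placedConfig_eq_empty fun v hv hvj => hj ?_).symm
    have := hσ.mem v hv.1 hv.2
    omega

end oneBased

/-- Every noncrossing involution has steady-state time at most `1`: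
`BB^1(w)` is in steady state. -/
theorem noncrossing_involution_steady_state_time_le_one (n : ℕ) (w : Equiv.Perm (Fin n))
    (hinv : w * w = 1) (hnc : Noncrossing w) :
    SteadyState n (BB n 1 (configOfPerm n w)) := by
  have hσ := isNoncrossingInvolution_oneBased hinv hnc
  rw [configOfPerm_eq_placedConfig hσ, BB, Function.iterate_one, hσ.BBMove_placedConfig_apply]
  exact hσ.steadyState_placedConfig_steadyPos
end

section
/- Let w be an involution in S_n. Then the common shape of the Robinson–Schensted tableaux P(w) and Q(w) (the RS partition of w) is L-shaped, i.e. of the form (s,1,1,...,1), if and only if w is a nested involution. -/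
open scoped Classical

/-!
Let `l` be the one-line word of `w`. Inserting `l` letter by letter, the insertion tableau is its
first row `R` on top of the insertion tableau of the word `B` of the entries bumped out of the
first row, so the shape is a hook iff `B` is decreasing. Patience sorting shows that `|R|` is the
length of a longest increasing subsequence of `l`, and following decreasing subsequences through
the insertion shows that `B` is decreasing iff `l` also has a decreasing subsequence of length
`|B| + 1`. Since `|R| + |B| = n` and an increasing and a decreasing subsequence share at most one
position, the shape is a hook iff the positions split into an increasing and a decreasing
subsequence of `w` sharing exactly one position.

For an involution, two 2-cycles that do not nest form a pattern `3412` (crossing) or `2143`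
(disjoint), and neither pattern is a merge of an increasing and a decreasing sequence.
Conversely, if `w` is nested, its non-fixed points form a decreasing subsequence and its fixed
points an increasing one; the shared position is a fixed point inside the innermost 2-cycle if
there is one, and the left end of that 2-cycle otherwise.
-/

namespace HookShape
open List

theorem sublist_append_singleton_cases {α : Type*} {s l : List α} {x : α} (h : s <+ l ++ [x]) :
    s <+ l ∨ ∃ s', s' <+ l ∧ s = s' ++ [x] := by
  obtain ⟨s₁, s₂, rfl, h₁, h₂⟩ := sublist_append_iff.1 h
  rcases sublist_singleton.1 h₂ with rfl | rfl
  · exact Or.inl (by simpa using h₁)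
  · exact Or.inr ⟨s₁, h₁, rfl⟩

theorem nodup_append_singleton_iff {α : Type*} {l : List α} {x : α} :
    (l ++ [x]).Nodup ↔ l.Nodup ∧ x ∉ l := by
  rw [nodup_append_comm]
  simp [and_comm]

theorem pairwise_append_singleton_iff {α : Type*} {R : α → α → Prop} {u : List α} {e : α} :
    (u ++ [e]).Pairwise R ↔ u.Pairwise R ∧ ∀ a ∈ u, R a e := by
  simp [pairwise_append]

section RowInsertion

variable {x : ℕ} {R : List ℕ}

theorem rowInsert_eq (hR : R.Pairwise (· < ·)) (hx : x ∉ R) :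
    ∃ r₁ r₂, R = r₁ ++ r₂ ∧ (∀ z ∈ r₁, z < x) ∧ (∀ z ∈ r₂, x < z) ∧
      rowInsert x R = (r₁ ++ x :: r₂.tail, r₂.head?) := by
  induction R with
  | nil => exact ⟨[], [], rfl, by simp, by simp, rfl⟩
  | cons a as ih =>
    obtain ⟨ha, has⟩ := pairwise_cons.1 hR
    have hxa : x ≠ a := fun h => hx (h ▸ mem_cons_self)
    by_cases hlt : x < a
    · refine ⟨[], a :: as, rfl, by simp, ?_, by simp [rowInsert, hlt]⟩
      simp only [mem_cons, forall_eq_or_imp]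
      exact ⟨hlt, fun z hz => hlt.trans (ha z hz)⟩
    · obtain ⟨r₁, r₂, rfl, h₁, h₂, hins⟩ := ih has (fun h => hx (mem_cons_of_mem _ h))
      refine ⟨a :: r₁, r₂, rfl, ?_, h₂, by simp [rowInsert, hlt, hins]⟩
      simp only [mem_cons, forall_eq_or_imp]
      exact ⟨by omega, h₁⟩

variable (hR : R.Pairwise (· < ·)) (hx : x ∉ R)
include hR hx

theorem rowInsert_perm : (rowInsert x R).1 ++ (rowInsert x R).2.toList ~ R ++ [x] := by
  obtain ⟨r₁, r₂, rfl, -, -, hins⟩ := rowInsert_eq hR hx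
  rw [hins]
  rcases r₂ with _ | ⟨y, r₂⟩
  · simp
  · simp only [tail_cons, head?_cons, Option.toList_some, append_assoc, cons_append,
      perm_iff_count]
    intro a
    simp only [count_cons, count_append]
    omega

theorem mem_rowInsert_fst_self : x ∈ (rowInsert x R).1 := by
  obtain ⟨r₁, r₂, -, -, -, hins⟩ := rowInsert_eq hR hx
  simp [hins]

theorem mem_rowInsert_fst_or_eq_some {z : ℕ} (hz : z ∈ R) :
    z ∈ (rowInsert x R).1 ∨ (rowInsert x R).2 = some z := by
  simpa using (rowInsert_perm hR hx).mem_iff.2 (mem_append_left _ hz)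

theorem rowInsert_fst_pairwise : (rowInsert x R).1.Pairwise (· < ·) := by
  obtain ⟨r₁, r₂, rfl, h₁, h₂, hins⟩ := rowInsert_eq hR hx
  obtain ⟨hr₁, hr₂, h₁₂⟩ := pairwise_append.1 hR
  have h₂' : ∀ z ∈ r₂.tail, x < z := fun z hz => h₂ z (mem_of_mem_tail hz)
  simp only [hins, pairwise_append, pairwise_cons, mem_cons, forall_eq_or_imp]
  exact ⟨hr₁, ⟨h₂', hr₂.sublist (tail_sublist _)⟩,
    fun z hz => ⟨h₁ z hz, fun b hb => h₁₂ z hz b (mem_of_mem_tail hb)⟩⟩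

theorem rowInsert_fst_of_snd_eq_none (h : (rowInsert x R).2 = none) :
    (rowInsert x R).1 = R ++ [x] := by
  obtain ⟨r₁, r₂, rfl, -, -, hins⟩ := rowInsert_eq hR hx
  rw [hins] at h ⊢
  rcases r₂ with _ | ⟨y, r₂⟩
  · simp
  · simp at h

theorem rowInsert_of_snd_eq_some {y : ℕ} (h : (rowInsert x R).2 = some y) :
    y ∈ R ∧ x < y ∧ ∀ z ∈ (rowInsert x R).1, z < y → z ≤ x := by
  obtain ⟨r₁, r₂, rfl, h₁, h₂, hins⟩ := rowInsert_eq hR hx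
  rw [hins] at h ⊢
  rcases r₂ with _ | ⟨b, r₂⟩
  · simp at h
  · simp only [head?_cons, Option.some.injEq] at h
    subst h
    have hr₂ := (pairwise_cons.1 (pairwise_append.1 hR).2.1).1
    refine ⟨by simp, h₂ _ mem_cons_self, fun z hz hzy => ?_⟩
    simp only [tail_cons, mem_append, mem_cons] at hz
    rcases hz with hz | rfl | hz
    · exact (h₁ z hz).le
    · exact le_rfl
    · exact absurd (hr₂ z hz) (by omega)

theorem exists_rowInsert_snd_eq_some {e : ℕ} (he : e ∈ R) (hxe : x < e) :
    ∃ y, (rowInsert x R).2 = some y ∧ y ≤ e := by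
  obtain ⟨r₁, r₂, rfl, h₁, h₂, hins⟩ := rowInsert_eq hR hx
  rcases mem_append.1 he with he | he
  · exact absurd (h₁ e he) (by omega)
  · obtain ⟨y, r₂, rfl⟩ := exists_cons_of_ne_nil (ne_nil_of_mem he)
    refine ⟨y, by simp [hins], ?_⟩
    rcases mem_cons.1 he with rfl | he
    · exact le_rfl
    · exact ((pairwise_cons.1 (pairwise_append.1 hR).2.1).1 e he).le

/-- The patience-sorting recurrence, which is also the recurrence of the length of a longest
increasing subsequence with entries below `a`. -/
theorem countP_rowInsert_fst (a : ℕ) :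
    (rowInsert x R).1.countP (· < a) =
      if x < a then max (R.countP (· < a)) (R.countP (· < x) + 1) else R.countP (· < a) := by
  obtain ⟨r₁, r₂, rfl, h₁, h₂, hins⟩ := rowInsert_eq hR hx
  have hr₁ : ∀ b, x ≤ b → r₁.countP (· < b) = r₁.length := fun b hb =>
    countP_eq_length.2 fun z hz => by simpa using (h₁ z hz).trans_le hb
  rw [hins]
  rcases r₂ with _ | ⟨y, t⟩
  · simp only [countP_append, countP_cons, append_nil, decide_eq_true_eq, hr₁ x le_rfl,
      tail_nil, countP_nil]
    split_ifs with hxa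
    · rw [hr₁ a hxa.le]; omega
    · rfl
  · have hxy : x < y := h₂ y mem_cons_self
    have hyt : ∀ z ∈ t, y < z := (pairwise_cons.1 (pairwise_append.1 hR).2.1).1
    have htx : t.countP (· < x) = 0 :=
      countP_eq_zero.2 fun z hz => by simpa using (hxy.trans (hyt z hz)).le
    have hta : ¬ y < a → t.countP (· < a) = 0 := fun hya =>
      countP_eq_zero.2 fun z hz => by simpa using (not_lt.1 hya).trans (hyt z hz).le
    simp only [countP_append, countP_cons, tail_cons, decide_eq_true_eq, hr₁ x le_rfl, htx,
      if_neg (not_lt.2 hxy.le)]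
    split_ifs with hxa hya hya
    · rw [hr₁ a hxa.le]; omega
    · rw [hr₁ a hxa.le, hta hya]; omega
    · omega
    · rfl

end RowInsertion

def bumpStep (s : List ℕ × List ℕ) (x : ℕ) : List ℕ × List ℕ :=
  ((rowInsert x s.1).1, s.2 ++ (rowInsert x s.1).2.toList)

def firstRow (l : List ℕ) : List ℕ := (l.foldl bumpStep ([], [])).1

def bumped (l : List ℕ) : List ℕ := (l.foldl bumpStep ([], [])).2

@[simp] theorem firstRow_nil : firstRow [] = [] := rfl

@[simp] theorem bumped_nil : bumped [] = [] := rfl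

@[simp] theorem firstRow_append_singleton (l : List ℕ) (x : ℕ) :
    firstRow (l ++ [x]) = (rowInsert x (firstRow l)).1 := by
  simp [firstRow, foldl_append, bumpStep]

@[simp] theorem bumped_append_singleton (l : List ℕ) (x : ℕ) :
    bumped (l ++ [x]) = bumped l ++ (rowInsert x (firstRow l)).2.toList := by
  simp [bumped, firstRow, foldl_append, bumpStep]

theorem firstRow_pairwise_and_perm {l : List ℕ} (hl : l.Nodup) :
    (firstRow l).Pairwise (· < ·) ∧ firstRow l ++ bumped l ~ l := by
  induction l using reverseRecOn with
  | nil => simp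
  | append_singleton l x ih =>
    obtain ⟨hl, hxl⟩ := nodup_append_singleton_iff.1 hl
    obtain ⟨hR, hperm⟩ := ih hl
    have hx : x ∉ firstRow l := fun h => hxl (hperm.subset (mem_append_left _ h))
    refine ⟨by simpa using rowInsert_fst_pairwise hR hx, ?_⟩
    calc firstRow (l ++ [x]) ++ bumped (l ++ [x])
        ~ bumped l ++ ((rowInsert x (firstRow l)).1 ++ (rowInsert x (firstRow l)).2.toList) := by
          simpa using perm_append_comm_assoc _ _ _
      _ ~ bumped l ++ (firstRow l ++ [x]) := (rowInsert_perm hR hx).append_left _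
      _ ~ l ++ [x] := by rw [← append_assoc]; exact (perm_append_comm.trans hperm).append_right _

theorem firstRow_pairwise {l : List ℕ} (hl : l.Nodup) : (firstRow l).Pairwise (· < ·) :=
  (firstRow_pairwise_and_perm hl).1

theorem firstRow_append_bumped_perm {l : List ℕ} (hl : l.Nodup) : firstRow l ++ bumped l ~ l :=
  (firstRow_pairwise_and_perm hl).2

theorem not_mem_firstRow {l : List ℕ} {x : ℕ} (hl : (l ++ [x]).Nodup) : x ∉ firstRow l := by
  obtain ⟨hl, hxl⟩ := nodup_append_singleton_iff.1 hl
  exact fun h => hxl ((firstRow_append_bumped_perm hl).subset (mem_append_left _ h))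

theorem firstRow_pairwise_of_append {l : List ℕ} {x : ℕ} (hl : (l ++ [x]).Nodup) :
    (firstRow l).Pairwise (· < ·) :=
  firstRow_pairwise (nodup_append_singleton_iff.1 hl).1

section Increasing

theorem exists_sublist_length_eq_countP_firstRow {l : List ℕ} (hl : l.Nodup) (a : ℕ) :
    ∃ s, s <+ l ∧ s.Pairwise (· < ·) ∧ (∀ b ∈ s, b < a) ∧
      s.length = (firstRow l).countP (· < a) := by
  induction l using reverseRecOn generalizing a with
  | nil => exact ⟨[], by simp⟩
  | append_singleton l x ih =>
    have hl' := (nodup_append_singleton_iff.1 hl).1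
    rw [firstRow_append_singleton,
      countP_rowInsert_fst (firstRow_pairwise_of_append hl) (not_mem_firstRow hl)]
    obtain ⟨s, hs, hsc, hsa, hlen⟩ := ih hl' a
    have hold : ∃ s, s <+ l ++ [x] ∧ s.Pairwise (· < ·) ∧ (∀ b ∈ s, b < a) ∧
        s.length = (firstRow l).countP (· < a) :=
      ⟨s, hs.trans (sublist_append_left _ _), hsc, hsa, hlen⟩
    split_ifs with hxa
    · rcases max_choice ((firstRow l).countP (· < a)) ((firstRow l).countP (· < x) + 1) with h | h
      · rwa [h]
      · rw [h]
        obtain ⟨t, ht, htc, htx, htlen⟩ := ih hl' x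
        refine ⟨t ++ [x], ht.append (Sublist.refl _), ?_, ?_, by simp [htlen]⟩
        · exact pairwise_append_singleton_iff.2 ⟨htc, htx⟩
        · simpa [or_imp, forall_and] using ⟨fun b hb => (htx b hb).trans hxa, hxa⟩
    · exact hold

theorem length_le_countP_firstRow {l s : List ℕ} (hl : l.Nodup) (hs : s <+ l)
    (hsc : s.Pairwise (· < ·)) {a : ℕ} (hsa : ∀ b ∈ s, b < a) :
    s.length ≤ (firstRow l).countP (· < a) := by
  induction l using reverseRecOn generalizing s a with
  | nil => simp_all
  | append_singleton l x ih =>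
    have hl' := (nodup_append_singleton_iff.1 hl).1
    rw [firstRow_append_singleton,
      countP_rowInsert_fst (firstRow_pairwise_of_append hl) (not_mem_firstRow hl)]
    rcases sublist_append_singleton_cases hs with hs | ⟨t, ht, rfl⟩
    · have := ih hl' hs hsc hsa
      split_ifs <;> omega
    · obtain ⟨htc, htx⟩ := pairwise_append_singleton_iff.1 hsc
      have hxa : x < a := hsa x (by simp)
      have := ih hl' ht htc htx
      simp only [length_append, length_singleton, if_pos hxa]
      omega

theorem exists_sublist_length_eq_length_firstRow {l : List ℕ} (hl : l.Nodup) :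
    ∃ s, s <+ l ∧ s.Pairwise (· < ·) ∧ s.length = (firstRow l).length := by
  obtain ⟨s, hs, hsc, -, hlen⟩ := exists_sublist_length_eq_countP_firstRow hl (l.sum + 1)
  refine ⟨s, hs, hsc, hlen.trans (countP_eq_length.2 fun b hb => ?_)⟩
  have := le_sum_of_mem ((firstRow_append_bumped_perm hl).subset (mem_append_left _ hb))
  simpa using Nat.lt_succ_of_le this

theorem length_le_length_firstRow {l s : List ℕ} (hl : l.Nodup) (hs : s <+ l)
    (hsc : s.Pairwise (· < ·)) : s.length ≤ (firstRow l).length :=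
  (length_le_countP_firstRow hl hs hsc (a := l.sum + 1)
    fun _ hb => Nat.lt_succ_of_le (le_sum_of_mem (hs.subset hb))).trans (countP_le_length)

end Increasing

section Decreasing

/-- The imprint left on the first row `R` and the bumped word `B` by a decreasing subsequence of
length `k` ending in `d`. -/
def DecreasingTrace (R B : List ℕ) (d k : ℕ) : Prop :=
  ∃ u e, u <+ B ∧ (u ++ [e]).Pairwise (· > ·) ∧ (e ∈ R ∨ u ++ [e] <+ B) ∧ d ≤ e ∧
    k ≤ u.length + 1

variable {l : List ℕ} {x : ℕ} (hl : (l ++ [x]).Nodup)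
include hl

theorem decreasingTrace_append_singleton_self :
    DecreasingTrace (firstRow (l ++ [x])) (bumped (l ++ [x])) x 1 := by
  refine ⟨[], x, nil_sublist _, by simp, Or.inl ?_, le_rfl, le_rfl⟩
  simpa using mem_rowInsert_fst_self (firstRow_pairwise_of_append hl) (not_mem_firstRow hl)

theorem DecreasingTrace.append_singleton {d k : ℕ}
    (h : DecreasingTrace (firstRow l) (bumped l) d k) :
    DecreasingTrace (firstRow (l ++ [x])) (bumped (l ++ [x])) d k := by
  have hR := firstRow_pairwise_of_append hl
  have hx := not_mem_firstRow hl
  obtain ⟨u, e, hu, hdec, he, hde, hk⟩ := h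
  simp only [firstRow_append_singleton, bumped_append_singleton]
  refine ⟨u, e, hu.trans (sublist_append_left _ _), hdec, ?_, hde, hk⟩
  rcases he with he | he
  · rcases mem_rowInsert_fst_or_eq_some hR hx he with he | he
    · exact Or.inl he
    · exact Or.inr (by simpa [he] using hu.append (Sublist.refl [e]))
  · exact Or.inr (he.trans (sublist_append_left _ _))

theorem DecreasingTrace.append_singleton_of_lt {d k : ℕ}
    (h : DecreasingTrace (firstRow l) (bumped l) d k) (hxd : x < d) :
    DecreasingTrace (firstRow (l ++ [x])) (bumped (l ++ [x])) x (k + 1) := by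
  have hR := firstRow_pairwise_of_append hl
  have hx := not_mem_firstRow hl
  obtain ⟨u, e, hu, hdec, he, hde, hk⟩ := h
  rw [pairwise_append_singleton_iff] at hdec
  obtain ⟨y, huy, hxy, hyu⟩ : ∃ y, u ++ [y] <+ bumped (l ++ [x]) ∧ x < y ∧ ∀ a ∈ u, a > y := by
    rcases he with he | he
    · obtain ⟨y, hy, hye⟩ := exists_rowInsert_snd_eq_some hR hx he (hxd.trans_le hde)
      refine ⟨y, by simpa [hy] using hu.append (Sublist.refl [y]),
        (rowInsert_of_snd_eq_some hR hx hy).2.1, fun a ha => hye.trans_lt (hdec.2 a ha)⟩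
    · exact ⟨e, he.trans (by simp), hxd.trans_le hde, hdec.2⟩
  refine ⟨u ++ [y], x, huy, ?_, Or.inl ?_, le_rfl, by simpa using hk⟩
  · simp only [pairwise_append_singleton_iff, mem_append, mem_singleton]
    refine ⟨⟨hdec.1, hyu⟩, ?_⟩
    rintro a (ha | rfl)
    · exact hxy.trans (hyu a ha)
    · exact hxy
  · simpa using mem_rowInsert_fst_self hR hx

omit hl in
theorem decreasingTrace_firstRow_bumped {l D : List ℕ} {d : ℕ} (hl : l.Nodup)
    (hD : D ++ [d] <+ l) (hDc : (D ++ [d]).Pairwise (· > ·)) :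
    DecreasingTrace (firstRow l) (bumped l) d (D.length + 1) := by
  induction l using reverseRecOn generalizing D d with
  | nil => simp at hD
  | append_singleton l x ih =>
    have hl' := (nodup_append_singleton_iff.1 hl).1
    rcases sublist_append_singleton_cases hD with hD | ⟨D', hD', hDD'⟩
    · exact (ih hl' hD hDc).append_singleton hl
    · obtain ⟨rfl, rfl⟩ := append_singleton_inj.1 hDD'
      rcases eq_nil_or_concat' D with rfl | ⟨D₀, d₀, rfl⟩
      · exact decreasingTrace_append_singleton_self hl
      · obtain ⟨hD₀, hd₀⟩ := pairwise_append_singleton_iff.1 hDc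
        simpa using (ih hl' hD' hD₀).append_singleton_of_lt hl (hd₀ d₀ (by simp))

omit hl in
theorem exists_sublist_bumped_length_add_one_ge {l D : List ℕ} (hl : l.Nodup) (hD : D <+ l)
    (hDc : D.Pairwise (· > ·)) :
    ∃ u, u <+ bumped l ∧ u.Pairwise (· > ·) ∧ D.length ≤ u.length + 1 := by
  rcases eq_nil_or_concat' D with rfl | ⟨D₀, d, rfl⟩
  · exact ⟨[], nil_sublist _, by simp, by simp⟩
  · obtain ⟨u, e, hu, hdec, -, -, hk⟩ := decreasingTrace_firstRow_bumped hl hD hDc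
    exact ⟨u, hu, (pairwise_append_singleton_iff.1 hdec).1, by simpa using hk⟩

/-- An invariant of insertion for as long as the bumped word `B` decreases. -/
def BumpChain (l R B : List ℕ) : Prop :=
  ∃ d v, d ++ [v] <+ l ∧ (d ++ [v]).Pairwise (· > ·) ∧ d.length = B.length ∧
    (∀ z, (∀ b ∈ B, z < b) → ∀ c ∈ d, z < c) ∧
    ∀ z ∈ R, (∀ b ∈ B, z < b) → z ≤ v ∨ d ++ [z] <+ l

theorem BumpChain.append_singleton_of_none (h : BumpChain l (firstRow l) (bumped l))
    (hnone : (rowInsert x (firstRow l)).2 = none) :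
    BumpChain (l ++ [x]) (firstRow (l ++ [x])) (bumped (l ++ [x])) := by
  obtain ⟨d, v, hdv, hdec, hlen, hdB, hR⟩ := h
  have hrow := rowInsert_fst_of_snd_eq_none (firstRow_pairwise_of_append hl)
    (not_mem_firstRow hl) hnone
  simp only [firstRow_append_singleton, bumped_append_singleton, hnone, hrow, Option.toList_none,
    append_nil]
  refine ⟨d, v, hdv.trans (sublist_append_left _ _), hdec, hlen, hdB, fun z hz hzB => ?_⟩
  rcases mem_append.1 hz with hz | hz
  · exact (hR z hz hzB).imp_right (·.trans (sublist_append_left _ _))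
  · rw [mem_singleton.1 hz]
    exact Or.inr (((sublist_append_left _ _).trans hdv).append (Sublist.refl _))

theorem BumpChain.append_singleton_of_some {y : ℕ} (hy : (rowInsert x (firstRow l)).2 = some y)
    (hyB : ∀ b ∈ bumped l, y < b) (h : bumped l = [] ∨ BumpChain l (firstRow l) (bumped l)) :
    BumpChain (l ++ [x]) (firstRow (l ++ [x])) (bumped (l ++ [x])) := by
  have hl' := (nodup_append_singleton_iff.1 hl).1
  obtain ⟨hyR, hxy, hleft⟩ :=
    rowInsert_of_snd_eq_some (firstRow_pairwise_of_append hl) (not_mem_firstRow hl) hy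
  obtain ⟨d, c, hdc, hdec, hlen, hdB, hyc⟩ : ∃ d c, d ++ [c] <+ l ∧ (d ++ [c]).Pairwise (· > ·) ∧
      d.length = (bumped l).length ∧ (∀ z, (∀ b ∈ bumped l, z < b) → ∀ a ∈ d, z < a) ∧ y ≤ c := by
    rcases h with hB | ⟨d, v, hdv, hdec, hlen, hdB, hR⟩
    · refine ⟨[], y, ?_, by simp, by simp [hB], by simp, le_rfl⟩
      simpa using (firstRow_append_bumped_perm hl').subset (mem_append_left _ hyR)
    · rcases hR y hyR hyB with hyv | hdy
      · exact ⟨d, v, hdv, hdec, hlen, hdB, hyv⟩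
      · refine ⟨d, y, hdy, ?_, hlen, hdB, le_rfl⟩
        exact pairwise_append_singleton_iff.2 ⟨(pairwise_append_singleton_iff.1 hdec).1, hdB y hyB⟩
  have hcd := (pairwise_append_singleton_iff.1 hdec).2
  simp only [firstRow_append_singleton, bumped_append_singleton, hy, Option.toList_some]
  refine ⟨d ++ [c], x, hdc.append (Sublist.refl _), ?_, by simp [hlen], ?_,
    fun z hz hzB => Or.inl (hleft z hz (hzB y (by simp)))⟩
  · refine pairwise_append_singleton_iff.2 ⟨hdec, ?_⟩
    simp only [mem_append, mem_singleton]
    rintro a (ha | rfl)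
    · exact (hxy.trans_le hyc).trans (hcd a ha)
    · exact hxy.trans_le hyc
  · simp only [mem_append, mem_singleton]
    rintro z hzB a (ha | rfl)
    · exact hdB z (fun b hb => hzB b (Or.inl hb)) a ha
    · exact (hzB y (Or.inr rfl)).trans_le hyc

omit hl in
theorem bumpChain_firstRow_bumped {l : List ℕ} (hl : l.Nodup) (hB : (bumped l).Pairwise (· > ·))
    (hne : bumped l ≠ []) : BumpChain l (firstRow l) (bumped l) := by
  induction l using reverseRecOn with
  | nil => simp at hne
  | append_singleton l x ih =>
    have hl' := (nodup_append_singleton_iff.1 hl).1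
    rcases ho : (rowInsert x (firstRow l)).2 with _ | y
    · simp only [bumped_append_singleton, ho, Option.toList_none, append_nil] at hB hne
      exact (ih hl' hB hne).append_singleton_of_none hl ho
    · simp only [bumped_append_singleton, ho, Option.toList_some, pairwise_append,
        mem_singleton, forall_eq] at hB
      refine BumpChain.append_singleton_of_some hl ho (fun b hb => hB.2.2 b hb) ?_
      exact (eq_or_ne (bumped l) []).imp_right (ih hl' hB.1)

omit hl in
theorem exists_sublist_length_eq_length_bumped_add_one {l : List ℕ} (hl : l.Nodup) (hne : l ≠ [])
    (hB : (bumped l).Pairwise (· > ·)) :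
    ∃ D, D <+ l ∧ D.Pairwise (· > ·) ∧ D.length = (bumped l).length + 1 := by
  rcases eq_or_ne (bumped l) [] with h | h
  · obtain ⟨a, ha⟩ := exists_mem_of_ne_nil l hne
    exact ⟨[a], singleton_sublist.2 ha, by simp, by simp [h]⟩
  · obtain ⟨d, v, hdv, hdec, hlen, -⟩ := bumpChain_firstRow_bumped hl hB h
    exact ⟨d ++ [v], hdv, hdec, by simp [hlen]⟩

end Decreasing

theorem bumped_pairwise_gt_iff {l : List ℕ} (hl : l.Nodup) (hne : l ≠ []) :
    (bumped l).Pairwise (· > ·) ↔ ∃ I D, I <+ l ∧ D <+ l ∧ I.Pairwise (· < ·) ∧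
      D.Pairwise (· > ·) ∧ I.length + D.length = l.length + 1 := by
  have hlen : (firstRow l).length + (bumped l).length = l.length := by
    simpa using (firstRow_append_bumped_perm hl).length_eq
  constructor
  · intro hB
    obtain ⟨I, hI, hIc, hIlen⟩ := exists_sublist_length_eq_length_firstRow hl
    obtain ⟨D, hD, hDc, hDlen⟩ := exists_sublist_length_eq_length_bumped_add_one hl hne hB
    exact ⟨I, D, hI, hD, hIc, hDc, by omega⟩
  · rintro ⟨I, D, hI, hD, hIc, hDc, hsum⟩
    have hIle := length_le_length_firstRow hl hI hIc
    obtain ⟨u, hu, huc, hDu⟩ := exists_sublist_bumped_length_add_one_ge hl hD hDc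
    rwa [← hu.eq_of_length_le (by omega)]

section Tableau

theorem RSP_eq_foldl_insertT (l : List ℕ) : RSP l = l.foldl insertT [] := by
  rw [RSP, RSpair, ← foldl_hom Prod.fst (g₂ := fun T p => insertT T p.2) fun _ _ => rfl,
    ← foldl_map, map_snd_zip (by simp)]

theorem foldl_insertT_eq_cons {l : List ℕ} (hne : l ≠ []) :
    l.foldl insertT [] = firstRow l :: (bumped l).foldl insertT [] := by
  induction l using reverseRecOn with
  | nil => exact absurd rfl hne
  | append_singleton l x ih =>
    rcases eq_or_ne l [] with rfl | hl
    · rfl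
    · rw [foldl_append, foldl_cons, foldl_nil, ih hl, firstRow_append_singleton,
        bumped_append_singleton]
      rcases h : rowInsert x (firstRow l) with ⟨r', _ | y⟩ <;> simp [insertT, h]

theorem insertT_map_singleton {x : ℕ} {c : List ℕ} (hc : (x :: c).Pairwise (· < ·)) :
    insertT (c.map ([·])) x = (x :: c).map ([·]) := by
  induction c generalizing x with
  | nil => rfl
  | cons a as ih =>
    have hxa : x < a := (pairwise_cons.1 hc).1 a mem_cons_self
    simp only [map_cons, insertT, rowInsert, if_pos hxa]
    rw [ih (pairwise_cons.1 hc).2]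
    rfl

theorem foldl_insertT_of_pairwise_gt {v : List ℕ} (hv : v.Pairwise (· > ·)) :
    v.foldl insertT [] = v.reverse.map ([·]) := by
  induction v using reverseRecOn with
  | nil => rfl
  | append_singleton v x ih =>
    obtain ⟨hv, hvx⟩ := pairwise_append_singleton_iff.1 hv
    rw [foldl_append, foldl_cons, foldl_nil, ih hv, insertT_map_singleton, reverse_append]
    · rfl
    · exact pairwise_cons.2 ⟨fun a ha => hvx a (mem_reverse.1 ha),
        pairwise_reverse.2 hv⟩

theorem pairwise_gt_of_length_firstRow_le_one {v : List ℕ} (hv : v.Nodup)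
    (h : (firstRow v).length ≤ 1) : v.Pairwise (· > ·) := by
  refine pairwise_iff_forall_sublist.2 fun {a b} hab => ?_
  rcases lt_trichotomy a b with hlt | rfl | hgt
  · have := length_le_length_firstRow hv hab (by simp [hlt])
    simp at this
    omega
  · exact absurd hab (nodup_iff_sublist.1 hv a)
  · exact hgt

theorem RSP_shape_eq_hook_iff {l : List ℕ} (hl : l.Nodup) (hne : l ≠ []) :
    (∃ s k, (RSP l).map length = s :: replicate k 1) ↔ (bumped l).Pairwise (· > ·) := by
  rw [RSP_eq_foldl_insertT, foldl_insertT_eq_cons hne]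
  constructor
  · rintro ⟨s, k, hk⟩
    have hB : (bumped l).Nodup :=
      ((firstRow_append_bumped_perm hl).nodup_iff.2 hl).sublist (sublist_append_right _ _)
    rcases eq_or_ne (bumped l) [] with h | h
    · simp [h]
    refine pairwise_gt_of_length_firstRow_le_one hB ?_
    rw [map_cons, cons.injEq, foldl_insertT_eq_cons h, map_cons] at hk
    rcases k with _ | k
    · simp at hk
    · simp [replicate_succ] at hk
      omega
  · intro hB
    refine ⟨(firstRow l).length, (bumped l).length, ?_⟩
    simp [foldl_insertT_of_pairwise_gt hB, Function.comp_def]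

end Tableau

section Order

variable {α β : Type*} [LinearOrder α] [Preorder β] {f : α → β}

theorem card_inter_le_one_of_strictMonoOn_of_strictAntiOn {S T : Finset α}
    (hS : StrictMonoOn f S) (hT : StrictAntiOn f T) : (S ∩ T).card ≤ 1 := by
  refine Finset.card_le_one.2 fun a ha b hb => ?_
  simp only [Finset.mem_inter] at ha hb
  by_contra hab
  rcases lt_or_gt_of_ne hab with h | h
  · exact lt_asymm (hS ha.1 hb.1 h) (hT ha.2 hb.2 h)
  · exact lt_asymm (hS hb.1 ha.1 h) (hT hb.2 ha.2 h)

theorem union_eq_univ_of_strictMonoOn_of_strictAntiOn [Fintype α] {S T : Finset α}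
    (hS : StrictMonoOn f S) (hT : StrictAntiOn f T) (h : S.card + T.card = Fintype.card α + 1) :
    S ∪ T = Finset.univ := by
  refine Finset.eq_univ_of_card _ (le_antisymm (Finset.card_le_univ _) ?_)
  have := card_inter_le_one_of_strictMonoOn_of_strictAntiOn hS hT
  have := Finset.card_union_add_card_inter S T
  omega

theorem not_cover_of_pattern3412 {S T : Set α} (hS : StrictMonoOn f S) (hT : StrictAntiOn f T)
    {i₁ i₂ i₃ i₄ : α} (h₁₂ : i₁ < i₂) (h₂₃ : i₂ < i₃) (h₃₄ : i₃ < i₄)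
    (hv₃₄ : f i₃ < f i₄) (hv₄₁ : f i₄ < f i₁) (hv₁₂ : f i₁ < f i₂) : ¬ ∀ i, i ∈ S ∨ i ∈ T := by
  intro hcover
  have hS' : ∀ {i j}, i < j → f j < f i → ¬ (i ∈ S ∧ j ∈ S) := fun hij hv h =>
    lt_asymm hv (hS h.1 h.2 hij)
  have hT' : ∀ {i j}, i < j → f i < f j → ¬ (i ∈ T ∧ j ∈ T) := fun hij hv h =>
    lt_asymm hv (hT h.1 h.2 hij)
  have := hS' (h₁₂.trans h₂₃) (hv₃₄.trans hv₄₁)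
  have := hS' ((h₁₂.trans h₂₃).trans h₃₄) hv₄₁
  have := hS' h₂₃ ((hv₃₄.trans hv₄₁).trans hv₁₂)
  have := hS' (h₂₃.trans h₃₄) (hv₄₁.trans hv₁₂)
  have := hT' h₁₂ hv₁₂
  have := hT' h₃₄ hv₃₄
  have := hcover i₁
  have := hcover i₂
  have := hcover i₃
  have := hcover i₄
  tauto

theorem not_cover_of_pattern2143 {S T : Set α} (hS : StrictMonoOn f S) (hT : StrictAntiOn f T)
    {i₁ i₂ i₃ i₄ : α} (h₁₂ : i₁ < i₂) (h₂₃ : i₂ < i₃) (h₃₄ : i₃ < i₄)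
    (hv₂₁ : f i₂ < f i₁) (hv₁₄ : f i₁ < f i₄) (hv₄₃ : f i₄ < f i₃) : ¬ ∀ i, i ∈ S ∨ i ∈ T :=
  fun hcover => not_cover_of_pattern3412 (f := OrderDual.toDual ∘ f)
    (strictMonoOn_toDual_comp_iff.2 hT) (strictAntiOn_toDual_comp_iff.2 hS) h₁₂ h₂₃ h₃₄
    (OrderDual.toDual_lt_toDual.2 hv₄₃) (OrderDual.toDual_lt_toDual.2 hv₁₄)
    (OrderDual.toDual_lt_toDual.2 hv₂₁) fun i => (hcover i).symm

end Order

section Involution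

variable {n : ℕ} {w : Equiv.Perm (Fin n)}

theorem exists_pattern_of_not_nested (hw : Function.Involutive w) (h : ¬ Nested w) :
    ∃ i₁ i₂ i₃ i₄ : Fin n, i₁ < i₂ ∧ i₂ < i₃ ∧ i₃ < i₄ ∧
      ((w i₃ < w i₄ ∧ w i₄ < w i₁ ∧ w i₁ < w i₂) ∨ (w i₂ < w i₁ ∧ w i₁ < w i₄ ∧ w i₄ < w i₃)) := by
  simp only [Nested, not_forall, not_or, not_and, not_lt] at h
  obtain ⟨a, b, c, d, hac, hbd, rfl, rfl, hab, h₁, h₂⟩ := h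
  wlog hlt : a < b generalizing a b
  · exact this b a hbd hac (Ne.symm hab) h₂ h₁ (lt_of_le_of_ne (not_lt.1 hlt) (Ne.symm hab))
  have hcd : w a < w b := lt_of_le_of_ne (h₁ hlt) (w.injective.ne hab)
  rcases lt_trichotomy b (w a) with hbc | hbc | hcb
  · refine ⟨a, b, w a, w b, hlt, hbc, hcd, Or.inl ⟨?_, ?_, ?_⟩⟩ <;> simp [hw _, hlt, hbc, hcd]
  · have hwb : w b = a := by rw [hbc, hw]
    rw [hwb] at hbd
    exact (lt_asymm hlt hbd).elim
  · refine ⟨a, w a, b, w b, hac, hcb, hbd, Or.inr ⟨?_, ?_, ?_⟩⟩ <;> simp [hw _, hac, hcb, hbd]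

theorem nested_of_strictMonoOn_of_strictAntiOn (hw : Function.Involutive w)
    {S T : Finset (Fin n)} (hS : StrictMonoOn w S) (hT : StrictAntiOn w T)
    (h : S.card + T.card = n + 1) : Nested w := by
  by_contra hN
  have hcover : ∀ i, i ∈ (S : Set (Fin n)) ∨ i ∈ (T : Set (Fin n)) := fun i => by
    simpa using (Finset.ext_iff.1 (union_eq_univ_of_strictMonoOn_of_strictAntiOn hS hT
      (by simpa using h)) i)
  obtain ⟨i₁, i₂, i₃, i₄, h₁₂, h₂₃, h₃₄, ⟨hv₁, hv₂, hv₃⟩ | ⟨hv₁, hv₂, hv₃⟩⟩ :=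
    exists_pattern_of_not_nested hw hN
  · exact not_cover_of_pattern3412 hS hT h₁₂ h₂₃ h₃₄ hv₁ hv₂ hv₃ hcover
  · exact not_cover_of_pattern2143 hS hT h₁₂ h₂₃ h₃₄ hv₁ hv₂ hv₃ hcover

theorem strictMonoOn_compl_support (w : Equiv.Perm (Fin n)) :
    StrictMonoOn w ↑(w.support)ᶜ := fun i hi j hj hij => by
  simp only [Finset.coe_compl, Set.mem_compl_iff, Finset.mem_coe, Equiv.Perm.mem_support,
    not_not] at hi hj
  rwa [hi, hj]

theorem Nested.strictAntiOn_support (hw : Function.Involutive w) (hN : Nested w) :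
    StrictAntiOn w ↑w.support := fun i hi j hj hij => by
  simp only [Finset.mem_coe, Equiv.Perm.mem_support] at hi hj
  have hwi := hw i
  have hwj := hw j
  have hinj : w i ≠ w j := w.injective.ne hij.ne
  rcases lt_or_gt_of_ne (Ne.symm hi) with hi | hi <;>
    rcases lt_or_gt_of_ne (Ne.symm hj) with hj | hj
  · have := hN i j (w i) (w j) hi hj rfl rfl hij.ne
    omega
  · rcases eq_or_ne i (w j) with hij' | hij'
    · omega
    · have := hN i (w j) (w i) j hi (by omega) rfl hwj hij'
      omega
  · have := hN (w i) j i (w j) (by omega) hj hwi rfl (by omega)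
    omega
  · have := hN (w i) (w j) i j (by omega) (by omega) hwi hwj hinj
    omega

theorem Nested.exists_innermost_arc (hw : Function.Involutive w) (hN : Nested w)
    (h : w.support.Nonempty) : ∃ a, a < w a ∧ ∀ j ∈ w.support, j ≤ a ∨ w a ≤ j := by
  set A := w.support.filter fun i => i < w i
  have hwA : ∀ i ∈ w.support, w i < i → w i ∈ A := fun i hi hlt =>
    Finset.mem_filter.2 ⟨Equiv.Perm.apply_mem_support.2 hi, by rwa [hw]⟩
  have hA : A.Nonempty := by
    obtain ⟨i, hi⟩ := h
    rcases lt_or_gt_of_ne (Ne.symm (Equiv.Perm.mem_support.1 hi)) with hlt | hgt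
    · exact ⟨i, Finset.mem_filter.2 ⟨hi, hlt⟩⟩
    · exact ⟨w i, hwA i hi hgt⟩
  obtain ⟨haS, ha⟩ := Finset.mem_filter.1 (A.max'_mem hA)
  refine ⟨A.max' hA, ha, fun j hj => ?_⟩
  by_contra! hin
  rcases lt_or_gt_of_ne (Ne.symm (Equiv.Perm.mem_support.1 hj)) with hlt | hgt
  · exact absurd (A.le_max' j (Finset.mem_filter.2 ⟨hj, hlt⟩)) (not_le.2 hin.1)
  · have h₂ := Nested.strictAntiOn_support hw hN hj (Equiv.Perm.apply_mem_support.2 haS) hin.2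
    rw [hw] at h₂
    exact absurd (A.le_max' _ (hwA j hj hgt)) (not_le.2 h₂)

theorem Nested.strictAntiOn_insert_fixed (hw : Function.Involutive w) (hN : Nested w) {a p : Fin n}
    (hgap : ∀ j ∈ w.support, j ≤ a ∨ w a ≤ j) (ha : a < w a) (hwp : w p = p) (hap : a < p)
    (hpa : p < w a) : StrictAntiOn w ↑(insert p w.support) := by
  have hanti := Nested.strictAntiOn_support hw hN
  have haS : a ∈ w.support := Equiv.Perm.mem_support.2 ha.ne'
  rw [Finset.coe_insert, strictAntiOn_insert_iff]
  refine ⟨fun b hb hbp => ?_, fun b hb hpb => ?_, hanti⟩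
  · have := hanti.antitoneOn hb haS ((hgap b hb).resolve_right (by omega))
    omega
  · have := hanti.antitoneOn (Equiv.Perm.apply_mem_support.2 haS) hb
      ((hgap b hb).resolve_left (by omega))
    rw [hw] at this
    omega

theorem strictMonoOn_insert_compl_support {a : Fin n} (ha : a < w a)
    (hfix : ∀ p, w p = p → a < p → w a ≤ p) : StrictMonoOn w ↑(insert a (w.support)ᶜ) := by
  rw [Finset.coe_insert, strictMonoOn_insert_iff]
  refine ⟨fun b hb hba => ?_, fun b hb hab => ?_, strictMonoOn_compl_support w⟩ <;>
    simp only [Finset.coe_compl, Set.mem_compl_iff, Finset.mem_coe, Equiv.Perm.mem_support,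
      not_not] at hb <;> rw [hb]
  · exact hba.trans ha
  · exact lt_of_le_of_ne (hfix b hb hab) fun h => hab.ne (w.injective (h.trans hb.symm))

theorem Nested.exists_card_add_card_eq (hn : 0 < n) (hw : Function.Involutive w)
    (hN : Nested w) : ∃ S T : Finset (Fin n), StrictMonoOn w S ∧ StrictAntiOn w T ∧
      S.card + T.card = n + 1 := by
  have hcard : (w.support)ᶜ.card + w.support.card = n :=
    (Finset.card_compl_add_card w.support).trans (Fintype.card_fin n)
  rcases w.support.eq_empty_or_nonempty with h | h
  · refine ⟨(w.support)ᶜ, {⟨0, hn⟩}, strictMonoOn_compl_support w, by simp, ?_⟩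
    rw [h, Finset.card_empty, add_zero] at hcard
    rw [h, hcard, Finset.card_singleton]
  obtain ⟨a, ha, hgap⟩ := Nested.exists_innermost_arc hw hN h
  by_cases hp : ∃ p, w p = p ∧ a < p ∧ p < w a
  · obtain ⟨p, hwp, hap, hpa⟩ := hp
    have hpS : p ∉ w.support := fun h => Equiv.Perm.mem_support.1 h hwp
    refine ⟨(w.support)ᶜ, insert p w.support, strictMonoOn_compl_support w,
      Nested.strictAntiOn_insert_fixed hw hN hgap ha hwp hap hpa, ?_⟩
    rw [Finset.card_insert_of_notMem hpS]
    omega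
  · push Not at hp
    refine ⟨insert a (w.support)ᶜ, w.support, strictMonoOn_insert_compl_support ha hp,
      Nested.strictAntiOn_support hw hN, ?_⟩
    rw [Finset.card_insert_of_notMem (by simpa using ha.ne')]
    omega

theorem nested_iff_exists_card_add_card_eq (hn : 0 < n) (hw : Function.Involutive w) :
    Nested w ↔ ∃ S T : Finset (Fin n), StrictMonoOn w S ∧ StrictAntiOn w T ∧
      S.card + T.card = n + 1 :=
  ⟨Nested.exists_card_add_card_eq hn hw,
    fun ⟨_, _, hS, hT, h⟩ => nested_of_strictMonoOn_of_strictAntiOn hw hS hT h⟩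

end Involution

section Positions

theorem exists_sublist_ofFn_iff {α : Type*} {n : ℕ} (f : Fin n → α) (r : α → α → Prop) (k : ℕ) :
    (∃ s, s <+ ofFn f ∧ s.Pairwise r ∧ s.length = k) ↔
      ∃ S : Finset (Fin n), S.card = k ∧ ∀ i ∈ S, ∀ j ∈ S, i < j → r (f i) (f j) := by
  rw [ofFn_eq_map]
  constructor
  · rintro ⟨s, hs, hsr, rfl⟩
    obtain ⟨L, hL, rfl⟩ := sublist_map_iff.1 hs
    have hLlt : L.Pairwise (· < ·) := (pairwise_lt_finRange n).sublist hL
    refine ⟨L.toFinset, by simpa using toFinset_card_of_nodup hLlt.nodup, fun i hi j hj hij => ?_⟩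
    rw [mem_toFinset] at hi hj
    refine Pairwise.forall_of_forall_of_flip (R := fun a b => a < b → r (f a) (f b))
      (fun a _ h => absurd h (lt_irrefl a)) ((pairwise_map.1 hsr).imp fun {a b} h (_ : a < b) => h)
      (hLlt.imp fun hab hba => absurd hab (not_lt.2 hba.le)) hi hj hij
  · rintro ⟨S, rfl, hS⟩
    have hsort := (S.sortedLT_sort).pairwise
    refine ⟨(S.sort (· ≤ ·)).map f, ?_, ?_, by simp⟩
    · refine (sublist_of_subperm_of_pairwise ?_ hsort (pairwise_lt_finRange n)).map f
      exact subperm_of_subset hsort.nodup fun i _ => mem_finRange i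
    · exact pairwise_map.2 (hsort.imp_of_mem fun hi hj hij =>
        hS _ ((S.mem_sort _).1 hi) _ ((S.mem_sort _).1 hj) hij)

variable {n : ℕ} (w : Equiv.Perm (Fin n))

theorem wordOf_nodup : (wordOf n w).Nodup :=
  nodup_ofFn.2 fun i j h => w.injective (Fin.ext (by simpa using h))

theorem length_wordOf : (wordOf n w).length = n := length_ofFn

theorem exists_sublists_wordOf_iff :
    (∃ I D, I <+ wordOf n w ∧ D <+ wordOf n w ∧ I.Pairwise (· < ·) ∧ D.Pairwise (· > ·) ∧
      I.length + D.length = n + 1) ↔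
    ∃ S T : Finset (Fin n), StrictMonoOn w S ∧ StrictAntiOn w T ∧ S.card + T.card = n + 1 := by
  have hmono : ∀ S : Finset (Fin n), StrictMonoOn w S ↔
      ∀ i ∈ S, ∀ j ∈ S, i < j → (w i : ℕ) + 1 < (w j : ℕ) + 1 := fun S => by
    simp [StrictMonoOn]
  have hanti : ∀ S : Finset (Fin n), StrictAntiOn w S ↔
      ∀ i ∈ S, ∀ j ∈ S, i < j → (w i : ℕ) + 1 > (w j : ℕ) + 1 := fun S => by
    simp [StrictAntiOn]
  constructor
  · rintro ⟨I, D, hI, hD, hIc, hDc, hsum⟩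
    obtain ⟨S, hS, hSm⟩ := (exists_sublist_ofFn_iff _ _ _).1 ⟨I, hI, hIc, rfl⟩
    obtain ⟨T, hT, hTa⟩ := (exists_sublist_ofFn_iff _ _ _).1 ⟨D, hD, hDc, rfl⟩
    exact ⟨S, T, (hmono S).2 hSm, (hanti T).2 hTa, by omega⟩
  · rintro ⟨S, T, hS, hT, hsum⟩
    obtain ⟨I, hI, hIc, hIlen⟩ := (exists_sublist_ofFn_iff _ _ _).2 ⟨S, rfl, (hmono S).1 hS⟩
    obtain ⟨D, hD, hDc, hDlen⟩ := (exists_sublist_ofFn_iff _ _ _).2 ⟨T, rfl, (hanti T).1 hT⟩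
    exact ⟨I, D, hI, hD, hIc, hDc, by omega⟩

end Positions

end HookShape

/-- An involution `w` has L-shaped RS partition (the common shape of `P(w)`
and `Q(w)`), i.e. of the form `(s,1,1,...,1)`, iff `w` is a nested involution. -/
theorem RS_partition_L_shaped_iff_nested (n : ℕ) (hn : 0 < n) (w : Equiv.Perm (Fin n))
    (hinv : w * w = 1) :
    (∃ s k : ℕ, (RSP (wordOf n w)).map List.length = s :: List.replicate k 1) ↔ Nested w := by
  have hw : Function.Involutive w := fun i => by
    simpa using congrArg (· i) hinv
  have hne : wordOf n w ≠ [] := List.ne_nil_of_length_pos (by rwa [HookShape.length_wordOf])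
  rw [HookShape.RSP_shape_eq_hook_iff (HookShape.wordOf_nodup w) hne,
    HookShape.bumped_pairwise_gt_iff (HookShape.wordOf_nodup w) hne, HookShape.length_wordOf,
    HookShape.exists_sublists_wordOf_iff, HookShape.nested_iff_exists_card_add_card_eq hn hw]
end
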